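/- arXiv:1607.06996 — 7 statements merged into one kernel-verified Lean document; each statement's English description precedes it below -/
import Mathlib

section
/- Weak duality for the smoothed-hinge sparse SVM: for every α > 0 and β > 0, every w ∈ ℝ^p and every θ in the box [0,1]^n, one has P(w; α, β) + D(θ; α, β) ≥ 0. -/
open Finset

/-- The smoothed hinge loss. -/
noncomputable def ell (γ t : ℝ) : ℝ :=
  if t < 0 then 0 else if t ≤ γ then t ^ 2 / (2 * γ) else t - γ / 2

/-- Componentwise soft-thresholding operator. -/
noncomputable def softThresh (β u : ℝ) : ℝ :=
  Real.sign u * max (|u| - β) 0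

/-- Primal objective P(w; α, β). -/
noncomputable def Pobj {n p : ℕ} (xb : Fin n → Fin p → ℝ) (γ α β : ℝ) (w : Fin p → ℝ) : ℝ :=
  (1 / (n : ℝ)) * ∑ i, ell γ (1 - ∑ j, xb i j * w j)
    + (α / 2) * ∑ j, w j ^ 2 + β * ∑ j, |w j|

/-- Dual objective D(θ; α, β). -/
noncomputable def Dobj {n p : ℕ} (xb : Fin n → Fin p → ℝ) (γ α β : ℝ) (θ : Fin n → ℝ) : ℝ :=
  (1 / (2 * α)) * ∑ j, softThresh β ((1 / (n : ℝ)) * ∑ i, θ i * xb i j) ^ 2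
    + (γ / (2 * (n : ℝ))) * ∑ i, θ i ^ 2 - (1 / (n : ℝ)) * ∑ i, θ i

lemma lemA (γ θ t : ℝ) (hγ : 0 < γ) (h0 : 0 ≤ θ) (h1 : θ ≤ 1) :
    θ * t ≤ ell γ t + γ * θ ^ 2 / 2 := by
  unfold ell
  split_ifs with h h2
  · nlinarith [mul_nonpos_of_nonneg_of_nonpos h0 h.le, sq_nonneg θ]
  · push_neg at h
    rw [← sub_le_iff_le_add, le_div_iff₀ (by positivity : (0:ℝ) < 2 * γ)]
    nlinarith [sq_nonneg (t - γ * θ)]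
  · push_neg at h2
    nlinarith [mul_nonneg (sub_nonneg.2 h1) (sub_nonneg.2 h2.le),
      mul_nonneg hγ.le (sq_nonneg (1 - θ))]

lemma lemB (α β u w : ℝ) (hα : 0 < α) (hβ : 0 < β) :
    u * w ≤ α / 2 * w ^ 2 + β * |w| + 1 / (2 * α) * softThresh β u ^ 2 := by
  have hs : softThresh β u ^ 2 = max (|u| - β) 0 ^ 2 := by
    unfold softThresh
    rcases lt_trichotomy u 0 with h | h | h
    · rw [Real.sign_of_neg h]; ring
    · subst h
      rw [abs_zero, max_eq_right (by linarith : (0:ℝ) - β ≤ 0)]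
      simp
    · rw [Real.sign_of_pos h]; ring
  rw [hs]
  set s := max (|u| - β) 0 with hsdef
  have hs0 : 0 ≤ s := le_max_right _ _
  have h1 : u * w ≤ |u| * |w| := by
    calc u * w ≤ |u * w| := le_abs_self _
    _ = |u| * |w| := abs_mul u w
  have hub : |u| - β ≤ s := le_max_left _ _
  have h2 : |u| * |w| ≤ s * |w| + β * |w| := by nlinarith [abs_nonneg w]
  have h3 : s * |w| - α / 2 * |w| ^ 2 ≤ 1 / (2 * α) * s ^ 2 := by
    rw [show (1:ℝ) / (2 * α) * s ^ 2 = s ^ 2 / (2 * α) by ring,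
      le_div_iff₀ (by positivity : (0:ℝ) < 2 * α)]
    nlinarith [sq_nonneg (s - α * |w|)]
  have h4 : |w| ^ 2 = w ^ 2 := sq_abs w
  rw [h4] at h3
  linarith [h1, h2, h3]

theorem weak_duality {n p : ℕ} (hn : 0 < n) (hp : 0 < p)
    (xb : Fin n → Fin p → ℝ) (γ : ℝ) (hγ0 : 0 < γ) (hγ1 : γ < 1)
    (α β : ℝ) (hα : 0 < α) (hβ : 0 < β)
    (w : Fin p → ℝ) (θ : Fin n → ℝ) (hθ : ∀ i, 0 ≤ θ i ∧ θ i ≤ 1) :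
    0 ≤ Pobj xb γ α β w + Dobj xb γ α β θ := by
  have hn' : (0:ℝ) < n := Nat.cast_pos.2 hn
  have sumA : ∑ i, θ i * (1 - ∑ j, xb i j * w j)
      ≤ ∑ i, (ell γ (1 - ∑ j, xb i j * w j) + γ * θ i ^ 2 / 2) :=
    Finset.sum_le_sum fun i _ => lemA γ (θ i) _ hγ0 (hθ i).1 (hθ i).2
  have sumB : ∑ j, ((1 / (n : ℝ)) * ∑ i, θ i * xb i j) * w j ≤
      ∑ j, (α / 2 * w j ^ 2 + β * |w j|
        + 1 / (2 * α) * softThresh β ((1 / (n : ℝ)) * ∑ i, θ i * xb i j) ^ 2) :=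
    Finset.sum_le_sum fun j _ => lemB α β _ (w j) hα hβ
  have hfub : ∑ j, ((1 / (n : ℝ)) * ∑ i, θ i * xb i j) * w j
      = (1 / (n : ℝ)) * ∑ i, θ i * ∑ j, xb i j * w j := by
    simp only [Finset.sum_mul, Finset.mul_sum]
    rw [Finset.sum_comm]
    apply Finset.sum_congr rfl
    intro i _
    apply Finset.sum_congr rfl
    intro j _
    ring
  have hexp : ∑ i, θ i * (1 - ∑ j, xb i j * w j)
      = ∑ i, θ i - ∑ i, θ i * ∑ j, xb i j * w j := by
    rw [← Finset.sum_sub_distrib]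
    apply Finset.sum_congr rfl
    intro i _
    ring
  have hsplitA : ∑ i, (ell γ (1 - ∑ j, xb i j * w j) + γ * θ i ^ 2 / 2)
      = ∑ i, ell γ (1 - ∑ j, xb i j * w j) + (γ / 2) * ∑ i, θ i ^ 2 := by
    rw [Finset.sum_add_distrib, Finset.mul_sum]
    congr 1
    apply Finset.sum_congr rfl
    intro i _
    ring
  have hsplitB : ∑ j, (α / 2 * w j ^ 2 + β * |w j|
        + 1 / (2 * α) * softThresh β ((1 / (n : ℝ)) * ∑ i, θ i * xb i j) ^ 2)
      = (α / 2) * ∑ j, w j ^ 2 + β * ∑ j, |w j|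
        + (1 / (2 * α)) * ∑ j, softThresh β ((1 / (n : ℝ)) * ∑ i, θ i * xb i j) ^ 2 := by
    rw [Finset.sum_add_distrib, Finset.sum_add_distrib, Finset.mul_sum, Finset.mul_sum,
      Finset.mul_sum]
  rw [hexp, hsplitA] at sumA
  rw [hfub, hsplitB] at sumB
  have keyA := mul_le_mul_of_nonneg_left sumA (by positivity : (0:ℝ) ≤ 1 / (n:ℝ))
  have e1 : (1 / (n:ℝ)) * (∑ i, ell γ (1 - ∑ j, xb i j * w j) + (γ / 2) * ∑ i, θ i ^ 2)
      = (1 / (n:ℝ)) * ∑ i, ell γ (1 - ∑ j, xb i j * w j)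
        + (γ / (2 * (n:ℝ))) * ∑ i, θ i ^ 2 := by
    field_simp
  have e2 : (1 / (n:ℝ)) * (∑ i, θ i - ∑ i, θ i * ∑ j, xb i j * w j)
      = (1 / (n:ℝ)) * ∑ i, θ i - (1 / (n:ℝ)) * ∑ i, θ i * ∑ j, xb i j * w j := by
    ring
  rw [e1, e2] at keyA
  unfold Pobj Dobj
  linarith [keyA, sumB]
end

section
/- Strong duality at the optima: if w* minimizes P(·; α, β) over ℝ^p and θ* minimizes D(·; α, β) over the box [0,1]^n, then P(w*; α, β) + D(θ*; α, β) = 0. -/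
open Finset

noncomputable def clamp (x : ℝ) : ℝ := max 0 (min 1 x)

lemma clamp_nonneg (x : ℝ) : 0 ≤ clamp x := le_max_left _ _

lemma clamp_le_one (x : ℝ) : clamp x ≤ 1 :=
  max_le zero_le_one (min_le_left _ _)

lemma clamp_lipschitz (a b : ℝ) : |clamp a - clamp b| ≤ |a - b| := by
  have h1 : |clamp a - clamp b| ≤ max |(0:ℝ) - 0| |min 1 a - min 1 b| :=
    abs_max_sub_max_le_max _ _ _ _
  have h2 : |min 1 a - min 1 b| ≤ max |(1:ℝ) - 1| |a - b| :=
    abs_min_sub_min_le_max _ _ _ _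
  simp at h1 h2
  exact h1.trans h2

lemma conj_le (γ t s : ℝ) (hγ : 0 < γ) (h0 : 0 ≤ s) (h1 : s ≤ 1) :
    s * t - γ * s ^ 2 / 2 ≤ ell γ t := by
  unfold ell
  split_ifs with ht1 ht2
  · nlinarith
  · push_neg at ht1
    rw [le_div_iff₀ (by linarith : (0:ℝ) < 2 * γ)]
    nlinarith [sq_nonneg (t - γ * s)]
  · push_neg at ht1 ht2
    nlinarith [mul_nonneg (sub_nonneg.2 h1) (le_of_lt (sub_pos.2 ht2)), sq_nonneg (1 - s)]

lemma conj_eq (γ t : ℝ) (hγ : 0 < γ) :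
    ell γ t = clamp (t / γ) * t - γ * (clamp (t / γ)) ^ 2 / 2 := by
  unfold ell clamp
  split_ifs with ht1 ht2
  · have : t / γ < 0 := div_neg_of_neg_of_pos ht1 hγ
    rw [min_eq_right (by linarith), max_eq_left (by linarith)]
    ring
  · push_neg at ht1
    have h0 : 0 ≤ t / γ := div_nonneg ht1 hγ.le
    have h1 : t / γ ≤ 1 := (div_le_one hγ).2 ht2
    rw [min_eq_right h1, max_eq_right h0]
    field_simp
    ring
  · push_neg at ht1 ht2
    have h1 : 1 ≤ t / γ := (one_le_div hγ).2 ht2.le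
    rw [min_eq_left h1, max_eq_right zero_le_one]
    ring

lemma smooth_ub (γ t h : ℝ) (hγ : 0 < γ) :
    ell γ (t + h) ≤ ell γ t + clamp (t / γ) * h + h ^ 2 / γ := by
  set s := clamp (t / γ) with hs
  set s' := clamp ((t + h) / γ) with hs'
  have heq := conj_eq γ (t + h) hγ
  have hle : s' * t - γ * s' ^ 2 / 2 ≤ ell γ t :=
    conj_le γ t s' hγ (clamp_nonneg _) (clamp_le_one _)
  have hlip : |s' - s| ≤ |h| / γ := by
    have := clamp_lipschitz ((t + h) / γ) (t / γ)
    have e : (t + h) / γ - t / γ = h / γ := by field_simp; ring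
    rw [e, abs_div, abs_of_pos hγ] at this
    exact this
  have hkey : (s' - s) * h ≤ h ^ 2 / γ := by
    have h1 : (s' - s) * h ≤ |s' - s| * |h| := by
      calc (s' - s) * h ≤ |(s' - s) * h| := le_abs_self _
        _ = |s' - s| * |h| := abs_mul _ _
    have h2 : |s' - s| * |h| ≤ (|h| / γ) * |h| :=
      mul_le_mul_of_nonneg_right hlip (abs_nonneg _)
    have h3 : (|h| / γ) * |h| = h ^ 2 / γ := by
      rw [div_mul_eq_mul_div, abs_mul_abs_self, ← sq]
    linarith
  rw [heq]
  nlinarith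

lemma softThresh_sq (β v : ℝ) (hβ : 0 < β) :
    (softThresh β v) ^ 2 = (max (|v| - β) 0) ^ 2 := by
  unfold softThresh
  rcases lt_trichotomy v 0 with h | h | h
  · rw [Real.sign_of_neg h]; ring
  · subst h
    rw [Real.sign_zero, zero_mul, abs_zero, zero_sub,
      max_eq_right (by linarith : -β ≤ (0:ℝ))]
  · rw [Real.sign_of_pos h]; ring

lemma coord_nonneg (α β w v : ℝ) (hα : 0 < α) (hβ : 0 < β) :
    0 ≤ α / 2 * w ^ 2 + β * |w| - v * w + 1 / (2 * α) * (softThresh β v) ^ 2 := by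
  rw [softThresh_sq β v hβ]
  set M := max (|v| - β) 0 with hM
  have hM0 : 0 ≤ M := le_max_right _ _
  have hvM : |v| ≤ β + M := by
    rcases le_total (|v| - β) 0 with h | h
    · rw [hM, max_eq_right h]; linarith
    · rw [hM, max_eq_left h]; linarith
  have hvw : v * w ≤ |v| * |w| := by
    calc v * w ≤ |v * w| := le_abs_self _
      _ = |v| * |w| := abs_mul _ _
  have hamgm : M * |w| ≤ α / 2 * w ^ 2 + 1 / (2 * α) * M ^ 2 := by
    have h1 : 0 ≤ (α * |w| - M) ^ 2 := sq_nonneg _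
    have h2 : w ^ 2 = |w| ^ 2 := (sq_abs w).symm
    rw [h2]
    have : 2 * α * (M * |w|) ≤ 2 * α * (α / 2 * |w| ^ 2 + 1 / (2 * α) * M ^ 2) := by
      have e : 2 * α * (α / 2 * |w| ^ 2 + 1 / (2 * α) * M ^ 2) = α ^ 2 * |w| ^ 2 + M ^ 2 := by
        field_simp
      nlinarith
    exact le_of_mul_le_mul_left this (by linarith)
  nlinarith [mul_le_mul_of_nonneg_right hvM (abs_nonneg w)]

lemma lim0 (a C s₀ : ℝ) (hC : 0 ≤ C) (hs : 0 < s₀)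
    (h : ∀ s, 0 < s → s ≤ s₀ → 0 ≤ a + C * s) : 0 ≤ a := by
  by_contra ha
  push_neg at ha
  set s := min s₀ (-a / (2 * (C + 1))) with hsdef
  have hs1 : 0 < s := lt_min hs (div_pos (by linarith) (by linarith))
  have hs2 : s ≤ s₀ := min_le_left _ _
  have hs3 : s ≤ -a / (2 * (C + 1)) := min_le_right _ _
  have hCs : C * s < -a := by
    have h1 : C * s ≤ C * (-a / (2 * (C + 1))) := mul_le_mul_of_nonneg_left hs3 hC
    have h2 : C * (-a / (2 * (C + 1))) < -a := by
      rw [mul_div_assoc']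
      rw [div_lt_iff₀ (by linarith : (0:ℝ) < 2 * (C + 1))]
      nlinarith
    linarith
  have := h s hs1 hs2
  linarith

lemma div_pos_step (A C s : ℝ) (hs : 0 < s) (h : 0 ≤ s * A + C * s ^ 2) :
    0 ≤ A + C * s := by
  nlinarith

lemma kkt (α β C w v : ℝ) (hα : 0 < α) (hβ : 0 < β) (hC : 0 ≤ C)
    (h : ∀ s, 0 ≤ s * (α * w - v) + β * (|w + s| - |w|) + C * s ^ 2) :
    softThresh β v = α * w := by
  rcases lt_trichotomy w 0 with hw | hw | hw
  · -- w < 0 : show v = α * w - β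
    have hup : 0 ≤ (α * w - v - β) := by
      apply lim0 _ C (-w) hC (by linarith)
      intro s hs1 hs2
      have habs : |w + s| = -(w + s) := abs_of_nonpos (by linarith)
      have := h s
      rw [habs, abs_of_neg hw] at this
      have hh : 0 ≤ s * (α * w - v - β) + C * s ^ 2 := by nlinarith
      have := div_pos_step (α * w - v - β) C s hs1 hh
      linarith
    have hdown : 0 ≤ -(α * w - v - β) := by
      apply lim0 _ C 1 hC one_pos
      intro s hs1 hs2
      have habs : |w + (-s)| = -(w + (-s)) := abs_of_nonpos (by linarith)
      have := h (-s)
      rw [habs, abs_of_neg hw] at this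
      have hh : 0 ≤ s * (-(α * w - v - β)) + C * s ^ 2 := by nlinarith
      have := div_pos_step (-(α * w - v - β)) C s hs1 hh
      linarith
    have hv : v = α * w - β := by linarith
    have hvneg : v < 0 := by nlinarith
    unfold softThresh
    rw [Real.sign_of_neg hvneg, abs_of_neg hvneg,
      max_eq_left (by nlinarith : (0:ℝ) ≤ -v - β)]
    nlinarith
  · -- w = 0 : show |v| ≤ β
    subst hw
    have hup : 0 ≤ β - v := by
      apply lim0 _ C 1 hC one_pos
      intro s hs1 hs2
      have := h s
      rw [zero_add, abs_zero] at this
      rw [abs_of_pos hs1] at this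
      have hh : 0 ≤ s * (β - v) + C * s ^ 2 := by nlinarith
      have := div_pos_step (β - v) C s hs1 hh
      linarith
    have hdown : 0 ≤ β + v := by
      apply lim0 _ C 1 hC one_pos
      intro s hs1 hs2
      have := h (-s)
      rw [zero_add, abs_zero, abs_of_neg (by linarith : -s < 0)] at this
      have hh : 0 ≤ s * (β + v) + C * s ^ 2 := by nlinarith
      have := div_pos_step (β + v) C s hs1 hh
      linarith
    unfold softThresh
    have habs : |v| - β ≤ 0 := by
      have : |v| ≤ β := abs_le.2 ⟨by linarith, by linarith⟩
      linarith
    rw [max_eq_right habs]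
    simp
  · -- w > 0 : show v = α * w + β
    have hup : 0 ≤ (α * w - v + β) := by
      apply lim0 _ C 1 hC one_pos
      intro s hs1 hs2
      have habs : |w + s| = w + s := abs_of_pos (by linarith)
      have := h s
      rw [habs, abs_of_pos hw] at this
      have hh : 0 ≤ s * (α * w - v + β) + C * s ^ 2 := by nlinarith
      have := div_pos_step (α * w - v + β) C s hs1 hh
      linarith
    have hdown : 0 ≤ -(α * w - v + β) := by
      apply lim0 _ C w hC hw
      intro s hs1 hs2
      have habs : |w + (-s)| = w + (-s) := abs_of_nonneg (by linarith)
      have := h (-s)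
      rw [habs, abs_of_pos hw] at this
      have hh : 0 ≤ s * (-(α * w - v + β)) + C * s ^ 2 := by nlinarith
      have := div_pos_step (-(α * w - v + β)) C s hs1 hh
      linarith
    have hv : v = α * w + β := by linarith
    have hvpos : 0 < v := by nlinarith
    unfold softThresh
    rw [Real.sign_of_pos hvpos, abs_of_pos hvpos,
      max_eq_left (by nlinarith : (0:ℝ) ≤ v - β)]
    nlinarith

lemma coord_eq (α β w v : ℝ) (hα : 0 < α) (hβ : 0 < β)
    (hS : softThresh β v = α * w) :
    α / 2 * w ^ 2 + β * |w| - v * w + 1 / (2 * α) * (softThresh β v) ^ 2 = 0 := by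
  rcases lt_trichotomy w 0 with hw | hw | hw
  · have hM : Real.sign v * max (|v| - β) 0 = α * w := hS
    have hneg : Real.sign v * max (|v| - β) 0 < 0 := by rw [hM]; nlinarith
    have hv : v < 0 := by
      rcases lt_trichotomy v 0 with h | h | h
      · exact h
      · exfalso; rw [h, Real.sign_zero, zero_mul] at hneg; linarith
      · exfalso
        rw [Real.sign_of_pos h] at hneg
        have := le_max_right (|v| - β) 0
        nlinarith [le_max_right (|v| - β) (0:ℝ)]
    rw [Real.sign_of_neg hv, abs_of_neg hv] at hM
    have hmax : max (-v - β) 0 = -v - β := by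
      rcases max_cases (-v - β) (0:ℝ) with ⟨he, _⟩ | ⟨he, hle⟩
      · exact he
      · exfalso; rw [he] at hM; nlinarith
    rw [hmax] at hM
    have hveq : v = α * w - β := by linarith
    rw [hS, abs_of_neg hw, hveq]
    field_simp
    ring
  · subst hw
    rw [hS]
    simp
  · have hM : Real.sign v * max (|v| - β) 0 = α * w := hS
    have hpos : 0 < Real.sign v * max (|v| - β) 0 := by rw [hM]; nlinarith
    have hv : 0 < v := by
      rcases lt_trichotomy v 0 with h | h | h
      · exfalso
        rw [Real.sign_of_neg h] at hpos
        nlinarith [le_max_right (|v| - β) (0:ℝ)]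
      · exfalso; rw [h, Real.sign_zero, zero_mul] at hpos; linarith
      · exact h
    rw [Real.sign_of_pos hv, abs_of_pos hv] at hM
    have hmax : max (v - β) 0 = v - β := by
      rcases max_cases (v - β) (0:ℝ) with ⟨he, _⟩ | ⟨he, hle⟩
      · exact he
      · exfalso; rw [he] at hM; nlinarith
    rw [hmax] at hM
    have hveq : v = α * w + β := by linarith
    rw [hS, abs_of_pos hw, hveq]
    field_simp
    ring

theorem strong_duality {n p : ℕ} (hn : 0 < n) (hp : 0 < p)
    (xb : Fin n → Fin p → ℝ) (γ : ℝ) (hγ0 : 0 < γ) (hγ1 : γ < 1)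
    (α β : ℝ) (hα : 0 < α) (hβ : 0 < β)
    (wstar : Fin p → ℝ) (θstar : Fin n → ℝ)
    (hw : ∀ w, Pobj xb γ α β wstar ≤ Pobj xb γ α β w)
    (hθbox : ∀ i, 0 ≤ θstar i ∧ θstar i ≤ 1)
    (hθ : ∀ θ : Fin n → ℝ, (∀ i, 0 ≤ θ i ∧ θ i ≤ 1) →
      Dobj xb γ α β θstar ≤ Dobj xb γ α β θ) :
    Pobj xb γ α β wstar + Dobj xb γ α β θstar = 0 := by
  have hn' : (0:ℝ) < (n:ℝ) := by exact_mod_cast hn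
  have hninv : (0:ℝ) ≤ 1 / (n:ℝ) := by positivity
  -- the key decomposition identity
  have key : ∀ θ : Fin n → ℝ,
      Pobj xb γ α β wstar + Dobj xb γ α β θ =
      (1 / (n:ℝ)) * ∑ i, (ell γ (1 - ∑ j, xb i j * wstar j)
          - θ i * (1 - ∑ j, xb i j * wstar j) + γ / 2 * θ i ^ 2)
      + ∑ j, (α / 2 * wstar j ^ 2 + β * |wstar j|
          - (1 / (n:ℝ) * ∑ i, θ i * xb i j) * wstar j
          + 1 / (2 * α) * softThresh β (1 / (n:ℝ) * ∑ i, θ i * xb i j) ^ 2) := by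
    intro θ
    have hswap : ∑ i, θ i * (∑ j, xb i j * wstar j)
        = ∑ j, (∑ i, θ i * xb i j) * wstar j := by
      simp_rw [Finset.mul_sum, Finset.sum_mul]
      rw [Finset.sum_comm]
      exact Finset.sum_congr rfl fun j _ => Finset.sum_congr rfl fun i _ => by ring
    have h1 : ∑ i, (ell γ (1 - ∑ j, xb i j * wstar j)
          - θ i * (1 - ∑ j, xb i j * wstar j) + γ / 2 * θ i ^ 2)
        = ∑ i, ell γ (1 - ∑ j, xb i j * wstar j)
          - (∑ i, θ i - ∑ j, (∑ i, θ i * xb i j) * wstar j)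
          + γ / 2 * ∑ i, θ i ^ 2 := by
      rw [Finset.sum_add_distrib, Finset.sum_sub_distrib, ← Finset.mul_sum]
      congr 1
      congr 1
      rw [← hswap, ← Finset.sum_sub_distrib]
      exact Finset.sum_congr rfl fun i _ => by ring
    have h2 : ∑ j, (α / 2 * wstar j ^ 2 + β * |wstar j|
          - (1 / (n:ℝ) * ∑ i, θ i * xb i j) * wstar j
          + 1 / (2 * α) * softThresh β (1 / (n:ℝ) * ∑ i, θ i * xb i j) ^ 2)
        = α / 2 * ∑ j, wstar j ^ 2 + β * ∑ j, |wstar j|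
          - 1 / (n:ℝ) * ∑ j, (∑ i, θ i * xb i j) * wstar j
          + 1 / (2 * α) * ∑ j, softThresh β (1 / (n:ℝ) * ∑ i, θ i * xb i j) ^ 2 := by
      rw [Finset.sum_add_distrib, Finset.sum_sub_distrib, Finset.sum_add_distrib,
        ← Finset.mul_sum, ← Finset.mul_sum, ← Finset.mul_sum]
      congr 2
      rw [Finset.mul_sum]
      exact Finset.sum_congr rfl fun j _ => by ring
    unfold Pobj Dobj
    rw [h1, h2]
    ring
  -- weak duality at (wstar, θstar)
  have weakA : 0 ≤ Pobj xb γ α β wstar + Dobj xb γ α β θstar := by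
    rw [key θstar]
    have h1 : 0 ≤ ∑ i, (ell γ (1 - ∑ j, xb i j * wstar j)
          - θstar i * (1 - ∑ j, xb i j * wstar j) + γ / 2 * θstar i ^ 2) :=
      Finset.sum_nonneg fun i _ => by
        have := conj_le γ (1 - ∑ j, xb i j * wstar j) (θstar i) hγ0 (hθbox i).1 (hθbox i).2
        nlinarith
    have h2 : 0 ≤ ∑ j, (α / 2 * wstar j ^ 2 + β * |wstar j|
          - (1 / (n:ℝ) * ∑ i, θstar i * xb i j) * wstar j
          + 1 / (2 * α) * softThresh β (1 / (n:ℝ) * ∑ i, θstar i * xb i j) ^ 2) :=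
      Finset.sum_nonneg fun j _ => coord_nonneg α β (wstar j) _ hα hβ
    nlinarith [mul_nonneg hninv h1]
  -- dual certificate
  set θh : Fin n → ℝ := fun i => clamp ((1 - ∑ j, xb i j * wstar j) / γ) with hθhdef
  have hθh : ∀ i, θh i = clamp ((1 - ∑ j, xb i j * wstar j) / γ) := fun i => by rw [hθhdef]
  have hbox : ∀ i, 0 ≤ θh i ∧ θh i ≤ 1 := fun i => by
    rw [hθh]; exact ⟨clamp_nonneg _, clamp_le_one _⟩
  -- variational inequality and KKT at each coordinate
  have hkkt : ∀ j, softThresh β (1 / (n:ℝ) * ∑ i, θh i * xb i j) = α * wstar j := by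
    intro j
    set Cj : ℝ := α / 2 + 1 / (n:ℝ) * ∑ i, (xb i j) ^ 2 / γ with hCjdef
    have hCj : 0 ≤ Cj := by
      have : 0 ≤ ∑ i, (xb i j) ^ 2 / γ :=
        Finset.sum_nonneg fun i _ => div_nonneg (sq_nonneg _) hγ0.le
      rw [hCjdef]
      have := mul_nonneg hninv this
      linarith
    apply kkt α β Cj (wstar j) _ hα hβ hCj
    intro s
    have hP := hw (fun k => wstar k + if k = j then s else 0)
    unfold Pobj at hP
    -- rewrite the perturbed sums
    have ha : ∀ i, ∑ k, xb i k * (wstar k + if k = j then s else 0)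
        = (∑ k, xb i k * wstar k) + xb i j * s := by
      intro i
      have : ∀ k ∈ Finset.univ, xb i k * (wstar k + if k = j then s else 0)
          = xb i k * wstar k + (if k = j then xb i k * s else 0) := by
        intro k _; split_ifs <;> ring
      rw [Finset.sum_congr rfl this, Finset.sum_add_distrib, Finset.sum_ite_eq']
      simp
    have hb : ∑ k, (wstar k + if k = j then s else 0) ^ 2
        = (∑ k, wstar k ^ 2) + (2 * wstar j * s + s ^ 2) := by
      have : ∀ k ∈ Finset.univ, (wstar k + if k = j then s else 0) ^ 2
          = wstar k ^ 2 + (if k = j then 2 * wstar j * s + s ^ 2 else 0) := by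
        intro k _
        by_cases hk : k = j
        · subst hk; rw [if_pos rfl, if_pos rfl]; ring
        · simp [hk]
      rw [Finset.sum_congr rfl this, Finset.sum_add_distrib, Finset.sum_ite_eq']
      simp
    have hc : ∑ k, |wstar k + if k = j then s else 0|
        = (∑ k, |wstar k|) + (|wstar j + s| - |wstar j|) := by
      have : ∀ k ∈ Finset.univ, |wstar k + if k = j then s else 0|
          = |wstar k| + (if k = j then |wstar j + s| - |wstar j| else 0) := by
        intro k _
        by_cases hk : k = j
        · subst hk; rw [if_pos rfl, if_pos rfl]; ring
        · simp [hk]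
      rw [Finset.sum_congr rfl this, Finset.sum_add_distrib, Finset.sum_ite_eq']
      simp
    simp only [ha, hb, hc] at hP
    -- smooth upper bound on perturbed hinge sum
    have hub : ∑ i, ell γ (1 - ((∑ k, xb i k * wstar k) + xb i j * s))
        ≤ (∑ i, ell γ (1 - ∑ k, xb i k * wstar k))
          + (-s) * (∑ i, θh i * xb i j)
          + s ^ 2 / γ * ∑ i, (xb i j) ^ 2 := by
      have hterm : ∀ i ∈ Finset.univ, ell γ (1 - ((∑ k, xb i k * wstar k) + xb i j * s))
          ≤ ell γ (1 - ∑ k, xb i k * wstar k) + θh i * (-(xb i j * s))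
            + (-(xb i j * s)) ^ 2 / γ := by
        intro i _
        have heq : 1 - ((∑ k, xb i k * wstar k) + xb i j * s)
            = (1 - ∑ k, xb i k * wstar k) + (-(xb i j * s)) := by ring
        rw [heq, hθh i]
        exact smooth_ub γ _ _ hγ0
      calc ∑ i, ell γ (1 - ((∑ k, xb i k * wstar k) + xb i j * s))
          ≤ ∑ i, (ell γ (1 - ∑ k, xb i k * wstar k) + θh i * (-(xb i j * s))
              + (-(xb i j * s)) ^ 2 / γ) := Finset.sum_le_sum hterm
        _ = (∑ i, ell γ (1 - ∑ k, xb i k * wstar k))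
              + (-s) * (∑ i, θh i * xb i j) + s ^ 2 / γ * ∑ i, (xb i j) ^ 2 := by
            rw [Finset.sum_add_distrib, Finset.sum_add_distrib,
              Finset.mul_sum, Finset.mul_sum]
            congr 1
            congr 1
            · exact Finset.sum_congr rfl fun i _ => by ring
            · exact Finset.sum_congr rfl fun i _ => by ring
    have hmul : (1 / (n:ℝ)) * ∑ i, ell γ (1 - ((∑ k, xb i k * wstar k) + xb i j * s))
        ≤ (1 / (n:ℝ)) * ((∑ i, ell γ (1 - ∑ k, xb i k * wstar k))
          + (-s) * (∑ i, θh i * xb i j)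
          + s ^ 2 / γ * ∑ i, (xb i j) ^ 2) := mul_le_mul_of_nonneg_left hub hninv
    rw [hCjdef]
    have hexp : 1 / (n:ℝ) * ∑ i, (xb i j) ^ 2 / γ
        = 1 / (n:ℝ) * ((∑ i, (xb i j) ^ 2) / γ) := by
      rw [← Finset.sum_div]
    rw [hexp]
    have h1 : 0 ≤ (1/(n:ℝ)) * ∑ i, ell γ (1 - ((∑ k, xb i k * wstar k) + xb i j * s))
        - (1/(n:ℝ)) * ∑ i, ell γ (1 - ∑ k, xb i k * wstar k)
        + α/2 * (2 * wstar j * s + s^2) + β * (|wstar j + s| - |wstar j|) := by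
      linarith [hP]
    have h2 : (1/(n:ℝ)) * ∑ i, ell γ (1 - ((∑ k, xb i k * wstar k) + xb i j * s))
        - (1/(n:ℝ)) * ∑ i, ell γ (1 - ∑ k, xb i k * wstar k)
        ≤ (1/(n:ℝ)) * (-s * ∑ i, θh i * xb i j)
          + (1/(n:ℝ)) * (s^2/γ * ∑ i, (xb i j)^2) := by
      nlinarith [hmul]
    have h3 : (1/(n:ℝ)) * (-s * ∑ i, θh i * xb i j)
        = -(s * ((1/(n:ℝ)) * ∑ i, θh i * xb i j)) := by ring
    have h4 : (1/(n:ℝ)) * (s^2/γ * ∑ i, (xb i j)^2)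
        = 1/(n:ℝ) * ((∑ i, (xb i j)^2)/γ) * s^2 := by ring
    nlinarith [h1, h2, h3, h4]
  -- P(wstar) + D(θh) = 0
  have hB : Pobj xb γ α β wstar + Dobj xb γ α β θh = 0 := by
    rw [key θh]
    have h1 : ∑ i, (ell γ (1 - ∑ j, xb i j * wstar j)
          - θh i * (1 - ∑ j, xb i j * wstar j) + γ / 2 * θh i ^ 2) = 0 :=
      Finset.sum_eq_zero fun i _ => by
        rw [hθh i, conj_eq γ (1 - ∑ j, xb i j * wstar j) hγ0]
        ring
    have h2 : ∑ j, (α / 2 * wstar j ^ 2 + β * |wstar j|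
          - (1 / (n:ℝ) * ∑ i, θh i * xb i j) * wstar j
          + 1 / (2 * α) * softThresh β (1 / (n:ℝ) * ∑ i, θh i * xb i j) ^ 2) = 0 :=
      Finset.sum_eq_zero fun j _ =>
        coord_eq α β (wstar j) _ hα hβ (hkkt j)
    rw [h1, h2]
    ring
  have hD : Dobj xb γ α β θstar ≤ Dobj xb γ α β θh := hθ θh hbox
  linarith
end

section
/- First KKT condition (KKT-1): if w* minimizes P(·; α, β) over ℝ^p and θ* minimizes D(·; α, β) over the box [0,1]^n, then w* = (1/α)·S_β((1/n)·X̄θ*). -/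
open Finset

/-! ### Auxiliary lemmas -/

lemma softThresh_eq (β u : ℝ) (hβ : 0 ≤ β) :
    softThresh β u = u - max (-β) (min β u) := by
  unfold softThresh
  rcases lt_trichotomy u 0 with h | h | h
  · have hmin : min β u = u := min_eq_right (le_trans h.le hβ)
    rw [Real.sign_of_neg h, abs_of_neg h, hmin]
    rcases le_or_gt (-β) u with h2 | h2
    · have hmax : max (-β) u = u := max_eq_right h2
      have hmax2 : max (-u - β) 0 = 0 := max_eq_right (by linarith)
      rw [hmax, hmax2]; ring
    · have hmax : max (-β) u = -β := max_eq_left h2.le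
      have hmax2 : max (-u - β) 0 = -u - β := max_eq_left (by linarith)
      rw [hmax, hmax2]; ring
  · subst h
    have hmin : min β 0 = 0 := min_eq_right hβ
    have hmax : max (-β) 0 = 0 := max_eq_right (by linarith)
    rw [Real.sign_zero, hmin, hmax]; ring
  · have hmax0 : max (-β) (min β u) = min β u :=
      max_eq_right (le_trans (by linarith) (le_min hβ h.le))
    rw [Real.sign_of_pos h, abs_of_pos h, hmax0]
    rcases le_or_gt u β with h2 | h2
    · have hmin : min β u = u := min_eq_right h2
      have hmax2 : max (u - β) 0 = 0 := max_eq_right (by linarith)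
      rw [hmin, hmax2]; ring
    · have hmin : min β u = β := min_eq_left h2.le
      have hmax2 : max (u - β) 0 = u - β := max_eq_left (by linarith)
      rw [hmin, hmax2]; ring

lemma clamp_mem (β u : ℝ) (hβ : 0 ≤ β) :
    -β ≤ max (-β) (min β u) ∧ max (-β) (min β u) ≤ β := by
  constructor
  · exact le_max_left _ _
  · rcases le_or_gt (min β u) (-β) with h | h
    · rw [max_eq_left h]; linarith
    · rw [max_eq_right h.le]; exact min_le_left _ _

lemma clamp_nearest (β u c : ℝ) (hc1 : -β ≤ c) (hc2 : c ≤ β) :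
    |u - max (-β) (min β u)| ≤ |u - c| := by
  rcases le_or_gt u (-β) with h | h
  · have hβ : -β ≤ β := le_trans hc1 hc2
    have hm : min β u = u := min_eq_right (by linarith)
    rw [hm, max_eq_left (by linarith)]
    rw [abs_of_nonpos (by linarith), abs_of_nonpos (by linarith)]; linarith
  · rcases le_or_gt β u with h2 | h2
    · rw [min_eq_left h2, max_eq_right (by linarith)]
      rw [abs_of_nonneg (by linarith), abs_of_nonneg (by linarith)]; linarith
    · have hm : min β u = u := min_eq_right h2.le
      rw [hm, max_eq_right h.le]; simp [abs_nonneg]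

lemma abs_sub_softThresh (β u : ℝ) (hβ : 0 ≤ β) : |u - softThresh β u| ≤ β := by
  rw [softThresh_eq β u hβ]
  have h := clamp_mem β u hβ
  rw [abs_le]; constructor
  · linarith [h.2]
  · linarith [h.1]

lemma softThresh_sq_smooth (β : ℝ) (hβ : 0 ≤ β) (u d : ℝ) :
    softThresh β (u + d) ^ 2 ≤ (softThresh β u + d) ^ 2 := by
  rw [softThresh_eq β (u+d) hβ, softThresh_eq β u hβ]
  have hm := clamp_mem β u hβ
  have h := clamp_nearest β (u + d) (max (-β) (min β u)) hm.1 hm.2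
  have h2 : |u + d - max (-β) (min β (u+d))| ^ 2 ≤ |u + d - max (-β) (min β u)| ^ 2 :=
    pow_le_pow_left₀ (abs_nonneg _) h 2
  rw [sq_abs, sq_abs] at h2
  calc (u + d - max (-β) (min β (u+d)))^2 ≤ (u + d - max (-β) (min β u))^2 := h2
  _ = (u - max (-β) (min β u) + d)^2 := by ring

lemma quad_lower (α β : ℝ) (hα : 0 < α) (hβ : 0 ≤ β) (u w : ℝ) :
    u * w + (α/2) * (w - softThresh β u / α)^2 ≤
      α/2 * w^2 + β * |w| + softThresh β u ^ 2 / (2*α) := by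
  have h := abs_sub_softThresh β u hβ
  have h2 : (u - softThresh β u) * w ≤ β * |w| := by
    calc (u - softThresh β u) * w ≤ |(u - softThresh β u) * w| := le_abs_self _
    _ = |u - softThresh β u| * |w| := abs_mul _ _
    _ ≤ β * |w| := mul_le_mul_of_nonneg_right h (abs_nonneg _)
  have hα' : α ≠ 0 := ne_of_gt hα
  have expand : (α/2) * (w - softThresh β u / α)^2
      = α/2 * w^2 - softThresh β u * w + softThresh β u ^ 2 / (2*α) := by
    field_simp; ring
  rw [expand]; linarith

lemma quad_eq (α β : ℝ) (hα : 0 < α) (hβ : 0 ≤ β) (u : ℝ) :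
    α/2 * (softThresh β u / α)^2 + β * |softThresh β u / α| + softThresh β u ^ 2 / (2*α)
      = u * (softThresh β u / α) := by
  have hα' : α ≠ 0 := ne_of_gt hα
  have key : softThresh β u ^ 2 + β * |softThresh β u| = u * softThresh β u := by
    rcases lt_trichotomy u (-β) with h | h | h
    · have hs : softThresh β u = u + β := by
        rw [softThresh_eq β u hβ]
        have hm : min β u = u := min_eq_right (by linarith)
        rw [hm, max_eq_left (by linarith)]; ring
      rw [hs, abs_of_neg (by linarith)]; ring
    · have hs : softThresh β u = 0 := by
        rw [softThresh_eq β u hβ, ← h]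
        have hm : min β u = u := min_eq_right (by linarith)
        rw [hm, max_eq_left (le_refl _)]; ring
      simp [hs]
    · rcases le_or_gt u β with h2 | h2
      · have hs : softThresh β u = 0 := by
          rw [softThresh_eq β u hβ]
          have hm : min β u = u := min_eq_right h2
          rw [hm, max_eq_right h.le]; ring
        simp [hs]
      · have hs : softThresh β u = u - β := by
          rw [softThresh_eq β u hβ, min_eq_left h2.le, max_eq_right (by linarith)]
        rw [hs, abs_of_pos (by linarith)]; ring
  have habs : |softThresh β u / α| = |softThresh β u| / α := by
    rw [abs_div, abs_of_pos hα]
  rw [habs]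
  have step1 : α/2 * (softThresh β u / α)^2 + β * (|softThresh β u| / α)
      + softThresh β u ^ 2 / (2*α)
      = (softThresh β u ^ 2 + β * |softThresh β u|) / α := by
    field_simp; ring
  rw [step1, key]; ring

lemma ell_ge (γ : ℝ) (hγ : 0 < γ) (t s : ℝ) (hs0 : 0 ≤ s) (hs1 : s ≤ 1) :
    s * t - γ * s^2 / 2 ≤ ell γ t := by
  unfold ell
  split_ifs with h1 h2
  · nlinarith
  · have h3 : 0 ≤ t := not_lt.mp h1
    have hpos : (0:ℝ) ≤ (t - γ * s)^2 / (2 * γ) := by positivity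
    have expand : t^2/(2*γ) - (s*t - γ*s^2/2) = (t - γ*s)^2/(2*γ) := by field_simp; ring
    linarith
  · push_neg at h1 h2
    nlinarith [mul_nonneg (sub_nonneg.mpr hs1) (by nlinarith : (0:ℝ) ≤ t - γ*(1+s)/2)]

lemma ell_eq (γ : ℝ) (hγ : 0 < γ) (t : ℝ) :
    ell γ t = (max 0 (min 1 (t/γ))) * t - γ * (max 0 (min 1 (t/γ)))^2 / 2 := by
  unfold ell
  split_ifs with h1 h2
  · have h3 : t / γ < 0 := div_neg_of_neg_of_pos h1 hγ
    rw [min_eq_right (by linarith), max_eq_left h3.le]; ring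
  · push_neg at h1
    have h3 : 0 ≤ t / γ := div_nonneg h1 hγ.le
    have h4 : t / γ ≤ 1 := (div_le_one hγ).mpr h2
    rw [min_eq_right h4, max_eq_right h3]
    field_simp; ring
  · push_neg at h1 h2
    have h3 : 1 ≤ t / γ := (one_le_div hγ).mpr h2.le
    rw [min_eq_left h3, max_eq_right zero_le_one]; ring

lemma small_s (L C : ℝ) (hC : 0 ≤ C) (h : ∀ s : ℝ, 0 < s → s ≤ 1 → 0 ≤ s * L + s^2 * C) :
    0 ≤ L := by
  by_contra hL
  push_neg at hL
  set s := min 1 (-L / (2*C+1)) with hs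
  have hs0 : 0 < s := lt_min one_pos (div_pos (by linarith) (by linarith))
  have hs1 : s ≤ 1 := min_le_left _ _
  have hs2 : s ≤ -L / (2*C+1) := min_le_right _ _
  have hmain := h s hs0 hs1
  have hsc : s * C ≤ -L/2 := by
    calc s * C ≤ (-L / (2*C+1)) * C := mul_le_mul_of_nonneg_right hs2 hC
    _ ≤ -L/2 := by
        rw [div_mul_eq_mul_div, div_le_div_iff₀ (by linarith) (by norm_num)]
        nlinarith
  nlinarith [mul_pos hs0 hs0]

lemma sum_sq_expand {m : ℕ} (f g : Fin m → ℝ) (s : ℝ) :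
    ∑ i, (f i + s * g i)^2
      = ∑ i, f i^2 + s * (2 * ∑ i, f i * g i) + s^2 * ∑ i, g i^2 := by
  simp only [Finset.mul_sum, ← Finset.sum_add_distrib]
  exact Finset.sum_congr rfl fun i _ => by ring

lemma sum_lin_expand {m : ℕ} (f g : Fin m → ℝ) (s : ℝ) :
    ∑ i, (f i + s * g i) = ∑ i, f i + s * ∑ i, g i := by
  simp only [Finset.mul_sum, ← Finset.sum_add_distrib]

/-- The vector X̄θ/n. -/
noncomputable def uu {n p : ℕ} (xb : Fin n → Fin p → ℝ) (θ : Fin n → ℝ) : Fin p → ℝ :=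
  fun j => (1 / (n : ℝ)) * ∑ i, θ i * xb i j

lemma Dobj_eq {n p : ℕ} (xb : Fin n → Fin p → ℝ) (γ α β : ℝ) (θ : Fin n → ℝ) :
    Dobj xb γ α β θ = (1 / (2 * α)) * ∑ j, softThresh β (uu xb θ j) ^ 2
      + (γ / (2 * (n : ℝ))) * ∑ i, θ i ^ 2 - (1 / (n : ℝ)) * ∑ i, θ i := rfl

lemma uu_lin {n p : ℕ} (xb : Fin n → Fin p → ℝ) (θ Δ : Fin n → ℝ) (s : ℝ) (j : Fin p) :
    uu xb (fun i => θ i + s * Δ i) j = uu xb θ j + s * uu xb Δ j := by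
  unfold uu
  have h : ∑ i, (θ i + s * Δ i) * xb i j
      = ∑ i, θ i * xb i j + s * ∑ i, Δ i * xb i j := by
    simp only [Finset.mul_sum, ← Finset.sum_add_distrib]
    exact Finset.sum_congr rfl fun i _ => by ring
  rw [h]; ring

lemma swap_sum {n p : ℕ} (xb : Fin n → Fin p → ℝ) (c : Fin n → ℝ) (w : Fin p → ℝ) :
    ∑ j, uu xb c j * w j = (1 / (n : ℝ)) * ∑ i, c i * ∑ j, xb i j * w j := by
  unfold uu
  simp only [Finset.mul_sum, Finset.sum_mul]
  rw [Finset.sum_comm]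
  exact Finset.sum_congr rfl fun i _ => Finset.sum_congr rfl fun j _ => by ring

/-- Variational inequality from dual optimality. -/
lemma vi {n p : ℕ} (xb : Fin n → Fin p → ℝ) (γ α β : ℝ) (hα : 0 < α) (hβ : 0 ≤ β)
    (θ Δ : Fin n → ℝ) (hbox : ∀ i, 0 ≤ θ i ∧ θ i ≤ 1)
    (hbox2 : ∀ i, 0 ≤ θ i + Δ i ∧ θ i + Δ i ≤ 1)
    (hopt : ∀ θ' : Fin n → ℝ, (∀ i, 0 ≤ θ' i ∧ θ' i ≤ 1) →
      Dobj xb γ α β θ ≤ Dobj xb γ α β θ')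
    (hγ : 0 ≤ γ) :
    0 ≤ (1/α) * ∑ j, softThresh β (uu xb θ j) * uu xb Δ j
        + (γ/(n:ℝ)) * ∑ i, θ i * Δ i - (1/(n:ℝ)) * ∑ i, Δ i := by
  have h2α : (0:ℝ) ≤ 1/(2*α) := by positivity
  have hNn : (0:ℝ) ≤ 1/(n:ℝ) := by positivity
  refine small_s _ ((1/(2*α)) * ∑ j, (uu xb Δ j)^2 + (γ/(2*(n:ℝ))) * ∑ i, Δ i^2) ?_ ?_
  · apply add_nonneg
    · exact mul_nonneg h2α (Finset.sum_nonneg fun j _ => sq_nonneg _)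
    · exact mul_nonneg (div_nonneg hγ (by positivity)) (Finset.sum_nonneg fun i _ => sq_nonneg _)
  · intro s hs0 hs1
    have hbox_s : ∀ i, 0 ≤ θ i + s * Δ i ∧ θ i + s * Δ i ≤ 1 := by
      intro i
      obtain ⟨h1, h2⟩ := hbox i
      obtain ⟨h3, h4⟩ := hbox2 i
      constructor <;> nlinarith
    have hDs := hopt _ hbox_s
    rw [Dobj_eq, Dobj_eq] at hDs
    have hX : ∑ j, softThresh β (uu xb (fun i => θ i + s * Δ i) j)^2
        ≤ ∑ j, softThresh β (uu xb θ j)^2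
          + s * (2 * ∑ j, softThresh β (uu xb θ j) * uu xb Δ j)
          + s^2 * ∑ j, (uu xb Δ j)^2 := by
      calc ∑ j, softThresh β (uu xb (fun i => θ i + s * Δ i) j)^2
          = ∑ j, softThresh β (uu xb θ j + s * uu xb Δ j)^2 :=
            Finset.sum_congr rfl fun j _ => by rw [uu_lin]
        _ ≤ ∑ j, (softThresh β (uu xb θ j) + s * uu xb Δ j)^2 :=
            Finset.sum_le_sum fun j _ => softThresh_sq_smooth β hβ _ _
        _ = _ := sum_sq_expand _ _ s
    rw [sum_sq_expand θ Δ s, sum_lin_expand θ Δ s] at hDs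
    have m1 := mul_le_mul_of_nonneg_left hX h2α
    have hident : (1/(2*α)) * (∑ j, softThresh β (uu xb θ j)^2
            + s * (2 * ∑ j, softThresh β (uu xb θ j) * uu xb Δ j)
            + s^2 * ∑ j, (uu xb Δ j)^2)
          + γ/(2*(n:ℝ)) * (∑ i, θ i^2 + s*(2*∑ i, θ i * Δ i) + s^2 * ∑ i, Δ i^2)
          - 1/(n:ℝ) * (∑ i, θ i + s * ∑ i, Δ i)
        = (1/(2*α)) * ∑ j, softThresh β (uu xb θ j)^2 + γ/(2*(n:ℝ)) * ∑ i, θ i^2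
            - 1/(n:ℝ) * ∑ i, θ i
          + (s * ((1/α) * ∑ j, softThresh β (uu xb θ j) * uu xb Δ j
              + (γ/(n:ℝ)) * ∑ i, θ i * Δ i - (1/(n:ℝ)) * ∑ i, Δ i)
             + s^2 * ((1/(2*α)) * ∑ j, (uu xb Δ j)^2 + (γ/(2*(n:ℝ))) * ∑ i, Δ i^2)) := by
      ring
    linarith [hDs, m1, hident.le, hident.ge]

/-- Core decomposition of the primal-dual gap. -/
lemma PD_core {n p : ℕ} (xb : Fin n → Fin p → ℝ) (γ α β : ℝ)
    (θ : Fin n → ℝ) (w : Fin p → ℝ) :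
    Pobj xb γ α β w + Dobj xb γ α β θ
      = (1/(n:ℝ)) * ∑ i, (ell γ (1 - ∑ j, xb i j * w j) + γ * θ i^2/2
            - θ i * (1 - ∑ j, xb i j * w j))
        + ∑ j, (α/2 * w j^2 + β * |w j| + softThresh β (uu xb θ j)^2/(2*α)
            - uu xb θ j * w j) := by
  have h1 : ∑ i, (ell γ (1 - ∑ j, xb i j * w j) + γ * θ i^2/2
        - θ i * (1 - ∑ j, xb i j * w j))
      = ∑ i, ell γ (1 - ∑ j, xb i j * w j) + (γ/2) * ∑ i, θ i^2
        - ∑ i, θ i * (1 - ∑ j, xb i j * w j) := by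
    simp only [Finset.mul_sum, ← Finset.sum_add_distrib, ← Finset.sum_sub_distrib]
    exact Finset.sum_congr rfl fun i _ => by ring
  have h2 : ∑ i, θ i * (1 - ∑ j, xb i j * w j)
      = ∑ i, θ i - ∑ i, θ i * ∑ j, xb i j * w j := by
    rw [← Finset.sum_sub_distrib]
    exact Finset.sum_congr rfl fun i _ => by ring
  have h3 := swap_sum xb θ w
  have h4 : ∑ j, (α/2 * w j^2 + β * |w j| + softThresh β (uu xb θ j)^2/(2*α)
        - uu xb θ j * w j)
      = (α/2) * ∑ j, w j^2 + β * ∑ j, |w j|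
        + (1/(2*α)) * ∑ j, softThresh β (uu xb θ j)^2 - ∑ j, uu xb θ j * w j := by
    simp only [Finset.mul_sum, ← Finset.sum_add_distrib, ← Finset.sum_sub_distrib]
    exact Finset.sum_congr rfl fun j _ => by ring
  rw [h1, h2, h4, h3, Dobj_eq]
  unfold Pobj
  ring

/-- Lower bound on the primal-dual gap. -/
lemma PD_ge {n p : ℕ} (xb : Fin n → Fin p → ℝ) (γ α β : ℝ) (hα : 0 < α) (hβ : 0 ≤ β)
    (hγ : 0 < γ) (θ : Fin n → ℝ) (hbox : ∀ i, 0 ≤ θ i ∧ θ i ≤ 1) (w : Fin p → ℝ) :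
    (α/2) * ∑ j, (w j - softThresh β (uu xb θ j)/α)^2
      ≤ Pobj xb γ α β w + Dobj xb γ α β θ := by
  rw [PD_core xb γ α β θ w]
  have t1 : 0 ≤ (1/(n:ℝ)) * ∑ i, (ell γ (1 - ∑ j, xb i j * w j) + γ * θ i^2/2
      - θ i * (1 - ∑ j, xb i j * w j)) := by
    apply mul_nonneg (by positivity)
    apply Finset.sum_nonneg
    intro i _
    have := ell_ge γ hγ (1 - ∑ j, xb i j * w j) (θ i) (hbox i).1 (hbox i).2
    linarith
  have t2 : (α/2) * ∑ j, (w j - softThresh β (uu xb θ j)/α)^2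
      ≤ ∑ j, (α/2 * w j^2 + β * |w j| + softThresh β (uu xb θ j)^2/(2*α)
          - uu xb θ j * w j) := by
    rw [Finset.mul_sum]
    apply Finset.sum_le_sum
    intro j _
    have := quad_lower α β hα hβ (uu xb θ j) (w j)
    linarith
  linarith

/-- Exact value of the gap at the candidate primal point. -/
lemma PD_eq {n p : ℕ} (xb : Fin n → Fin p → ℝ) (γ α β : ℝ) (hα : 0 < α) (hβ : 0 ≤ β)
    (θ : Fin n → ℝ) (v : Fin p → ℝ) (hv : ∀ j, v j = softThresh β (uu xb θ j)/α) :
    Pobj xb γ α β v + Dobj xb γ α β θ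
      = (1/(n:ℝ)) * ∑ i, (ell γ (1 - ∑ j, xb i j * v j) + γ * θ i^2/2
          - θ i * (1 - ∑ j, xb i j * v j)) := by
  rw [PD_core xb γ α β θ v]
  have hz : ∑ j, (α/2 * v j^2 + β * |v j| + softThresh β (uu xb θ j)^2/(2*α)
      - uu xb θ j * v j) = 0 := by
    apply Finset.sum_eq_zero
    intro j _
    rw [hv j]
    have := quad_eq α β hα hβ (uu xb θ j)
    linarith
  rw [hz, add_zero]

theorem kkt_one {n p : ℕ} (hn : 0 < n) (hp : 0 < p)
    (xb : Fin n → Fin p → ℝ) (γ : ℝ) (hγ0 : 0 < γ) (hγ1 : γ < 1)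
    (α β : ℝ) (hα : 0 < α) (hβ : 0 < β)
    (wstar : Fin p → ℝ) (θstar : Fin n → ℝ)
    (hw : ∀ w, Pobj xb γ α β wstar ≤ Pobj xb γ α β w)
    (hθbox : ∀ i, 0 ≤ θstar i ∧ θstar i ≤ 1)
    (hθ : ∀ θ : Fin n → ℝ, (∀ i, 0 ≤ θ i ∧ θ i ≤ 1) →
      Dobj xb γ α β θstar ≤ Dobj xb γ α β θ) :
    ∀ j, wstar j = (1 / α) * softThresh β ((1 / (n : ℝ)) * ∑ i, θstar i * xb i j) := by
  intro j0
  obtain ⟨v, hv⟩ : ∃ v : Fin p → ℝ, ∀ j, v j = softThresh β (uu xb θstar j)/α :=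
    ⟨_, fun j => rfl⟩
  obtain ⟨t, ht⟩ : ∃ t : Fin n → ℝ, ∀ i, t i = 1 - ∑ j, xb i j * v j :=
    ⟨_, fun i => rfl⟩
  obtain ⟨th, hth⟩ : ∃ th : Fin n → ℝ, ∀ i, th i = max 0 (min 1 (t i / γ)) :=
    ⟨_, fun i => rfl⟩
  obtain ⟨Δ, hΔ⟩ : ∃ Δ : Fin n → ℝ, ∀ i, Δ i = th i - θstar i :=
    ⟨_, fun i => rfl⟩
  have hbox2 : ∀ i, 0 ≤ θstar i + Δ i ∧ θstar i + Δ i ≤ 1 := by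
    intro i
    have hx : θstar i + Δ i = th i := by rw [hΔ i]; ring
    rw [hx, hth i]
    exact ⟨le_max_left _ _, max_le zero_le_one (min_le_left _ _)⟩
  have hVI := vi xb γ α β hα hβ.le θstar Δ hθbox hbox2 hθ hγ0.le
  have hswap : (1/α) * ∑ j, softThresh β (uu xb θstar j) * uu xb Δ j
      = (1/(n:ℝ)) * ∑ i, Δ i * ∑ j, xb i j * v j := by
    have e1 : (1/α) * ∑ j, softThresh β (uu xb θstar j) * uu xb Δ j
        = ∑ j, uu xb Δ j * v j := by
      rw [Finset.mul_sum]
      refine Finset.sum_congr rfl fun j _ => ?_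
      rw [hv j]; ring
    rw [e1, swap_sum xb Δ v]
  have hcomb : ∑ i, Δ i * (γ * θstar i - t i)
      = γ * ∑ i, θstar i * Δ i - ∑ i, Δ i + ∑ i, Δ i * ∑ j, xb i j * v j := by
    have h5 : ∀ i, Δ i * (γ * θstar i - t i)
        = γ * (θstar i * Δ i) - Δ i + Δ i * ∑ j, xb i j * v j := fun i => by
      rw [ht i]; ring
    rw [Finset.sum_congr rfl fun i _ => h5 i, Finset.sum_add_distrib,
      Finset.sum_sub_distrib, ← Finset.mul_sum]
  have hL : 0 ≤ (1/(n:ℝ)) * ∑ i, Δ i * (γ * θstar i - t i) := by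
    rw [hswap] at hVI
    rw [hcomb]
    have hexp : (1/(n:ℝ)) * (γ * ∑ i, θstar i * Δ i - ∑ i, Δ i
          + ∑ i, Δ i * ∑ j, xb i j * v j)
        = (1/(n:ℝ)) * ∑ i, Δ i * ∑ j, xb i j * v j
          + (γ/(n:ℝ)) * ∑ i, θstar i * Δ i - (1/(n:ℝ)) * ∑ i, Δ i := by ring
    rw [hexp]
    exact hVI
  have heq := PD_eq xb γ α β hα hβ.le θstar v hv
  have hterm : ∀ i, ell γ (1 - ∑ j, xb i j * v j) + γ * θstar i^2/2
        - θstar i * (1 - ∑ j, xb i j * v j)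
      = -(Δ i * (γ * θstar i - t i) + (γ/2) * Δ i^2) := by
    intro i
    rw [← ht i, ell_eq γ hγ0 (t i), ← hth i, hΔ i]
    ring
  have hesum : ∑ i, (ell γ (1 - ∑ j, xb i j * v j) + γ * θstar i^2/2
        - θstar i * (1 - ∑ j, xb i j * v j))
      = -∑ i, Δ i * (γ * θstar i - t i) - (γ/2) * ∑ i, Δ i^2 := by
    rw [Finset.sum_congr rfl fun i _ => hterm i]
    simp only [Finset.mul_sum, ← Finset.sum_neg_distrib, ← Finset.sum_sub_distrib]
    exact Finset.sum_congr rfl fun i _ => by ring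
  have hge := PD_ge xb γ α β hα hβ.le hγ0 θstar hθbox wstar
  have hwv := hw v
  have hq : (0:ℝ) ≤ 1/(n:ℝ) * (γ * ∑ i, Δ i^2) :=
    mul_nonneg (by positivity)
      (mul_nonneg hγ0.le (Finset.sum_nonneg fun i _ => sq_nonneg _))
  have key : (α/2) * ∑ j, (wstar j - softThresh β (uu xb θstar j)/α)^2 ≤ 0 := by
    have c1 : Pobj xb γ α β wstar + Dobj xb γ α β θstar
        ≤ Pobj xb γ α β v + Dobj xb γ α β θstar := by linarith
    rw [heq, hesum] at c1
    have c2 : (1/(n:ℝ)) * (-∑ i, Δ i * (γ * θstar i - t i) - (γ/2) * ∑ i, Δ i^2)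
        = -((1/(n:ℝ)) * ∑ i, Δ i * (γ * θstar i - t i))
          - (1/(n:ℝ) * (γ * ∑ i, Δ i^2))/2 := by ring
    rw [c2] at c1
    linarith
  have hS : (0:ℝ) ≤ ∑ j, (wstar j - softThresh β (uu xb θstar j)/α)^2 :=
    Finset.sum_nonneg fun j _ => sq_nonneg _
  have hsum0 : ∑ j, (wstar j - softThresh β (uu xb θstar j)/α)^2 ≤ 0 := by
    nlinarith
  have hnn : ∀ j ∈ Finset.univ, (0:ℝ) ≤ (wstar j - softThresh β (uu xb θstar j)/α)^2 :=
    fun j _ => sq_nonneg _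
  have heach := Finset.single_le_sum hnn (Finset.mem_univ j0)
  have hj : (wstar j0 - softThresh β (uu xb θstar j0)/α)^2 = 0 := by
    have := sq_nonneg (wstar j0 - softThresh β (uu xb θstar j0)/α)
    linarith
  have hj2 : wstar j0 - softThresh β (uu xb θstar j0)/α = 0 :=
    pow_eq_zero_iff (by norm_num) |>.mp hj
  have hdef : softThresh β ((1 / (n : ℝ)) * ∑ i, θstar i * xb i j0)
      = softThresh β (uu xb θstar j0) := rfl
  rw [hdef]
  have hfin : wstar j0 = softThresh β (uu xb θstar j0)/α := by linarith
  rw [hfin]; ring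
end

section
/- Exact feature screening rule (R)(i): if w* minimizes P(·; α, β) over ℝ^p and θ* minimizes D(·; α, β) over the box [0,1]^n, then for every j ∈ {1, …, p}, the inequality (1/n)·|[X̄θ*]_j| ≤ β implies [w*]_j = 0. -/
open Finset

/-- Derivative of the smoothed hinge loss. -/
noncomputable def dl (γ t : ℝ) : ℝ :=
  if t < 0 then 0 else if t ≤ γ then t / γ else 1

lemma dl_nonneg {γ : ℝ} (hγ : 0 < γ) (t : ℝ) : 0 ≤ dl γ t := by
  unfold dl; split_ifs with h1 h2
  · exact le_refl 0
  · exact div_nonneg (le_of_not_gt h1) hγ.le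
  · exact zero_le_one

lemma dl_le_one {γ : ℝ} (hγ : 0 < γ) (t : ℝ) : dl γ t ≤ 1 := by
  unfold dl; split_ifs with h1 h2
  · exact zero_le_one
  · exact (div_le_one hγ).mpr h2
  · exact le_refl 1

lemma fenchelA {γ : ℝ} (hγ : 0 < γ) (t θ : ℝ) (h0 : 0 ≤ θ) (h1 : θ ≤ 1) :
    0 ≤ ell γ t + γ * θ ^ 2 / 2 - θ * t := by
  unfold ell; split_ifs with ht1 ht2
  · nlinarith [mul_nonneg h0 (neg_nonneg.mpr ht1.le)]
  · have e : t ^ 2 / (2 * γ) + γ * θ ^ 2 / 2 - θ * t = (t - γ * θ) ^ 2 / (2 * γ) := by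
      field_simp; ring
    rw [e]; positivity
  · nlinarith [mul_nonneg (sub_nonneg.mpr h1) (sub_nonneg.mpr (le_of_not_ge ht2)),
      mul_nonneg hγ.le (sq_nonneg (1 - θ))]

lemma fenchel_eq {γ : ℝ} (hγ : 0 < γ) (t : ℝ) :
    ell γ t + γ * (dl γ t) ^ 2 / 2 - dl γ t * t = 0 := by
  unfold ell dl; split_ifs with ht1 ht2
  · ring
  · field_simp; ring
  · ring

set_option maxHeartbeats 1000000 in
lemma smooth {γ : ℝ} (hγ : 0 < γ) (s t : ℝ) :
    ell γ s ≤ ell γ t + dl γ t * (s - t) + (s - t) ^ 2 / (2 * γ) := by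
  unfold ell dl
  have h2γ : (0:ℝ) < 2 * γ := by linarith
  split_ifs with ha hb hc hb hd hc hb hc
  · nlinarith [div_nonneg (sq_nonneg (s - t)) h2γ.le]
  · rw [← sub_nonneg]; field_simp
    nlinarith [sq_nonneg (s - t), sq_nonneg s, mul_pos hγ hγ, mul_nonneg hγ.le (sq_nonneg s)]
  · rw [← sub_nonneg]; field_simp
    nlinarith [sq_nonneg (s - t), sq_nonneg (s - γ), mul_pos (sub_pos.mpr (lt_of_not_ge hc)) (show (0:ℝ) < γ + (t - s) - s by nlinarith)]
  · rw [← sub_nonneg]; field_simp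
    nlinarith [sq_nonneg s, mul_pos (neg_pos.mpr hd) (show (0:ℝ) < t - 2*s - (t - 0) + (2*s - 2*t) from by nlinarith)]
  · rw [← sub_nonneg]; field_simp
    nlinarith [sq_nonneg s, mul_pos hγ hγ]
  · rw [← sub_nonneg]; field_simp
    nlinarith [mul_nonneg (sub_pos.mpr (lt_of_not_ge hc)).le (show (0:ℝ) ≤ t + γ - 2*s from by nlinarith)]
  · rw [← sub_nonneg]; field_simp
    nlinarith [sq_nonneg (s - γ), mul_pos (neg_pos.mpr hb) (show (0:ℝ) < 2*s - t - γ from by nlinarith)]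
  · rw [← sub_nonneg]; field_simp
    nlinarith [sq_nonneg (s - γ), sq_nonneg (s - t), mul_pos hγ hγ]
  · nlinarith [div_nonneg (sq_nonneg (s - t)) h2γ.le]

lemma st_sq {β : ℝ} (hβ : 0 < β) (u : ℝ) :
    (softThresh β u) ^ 2 = max (|u| - β) 0 ^ 2 := by
  unfold softThresh
  rcases lt_trichotomy u 0 with h | h | h
  · rw [Real.sign_of_neg h]; ring
  · subst h; simp [Real.sign_zero, abs_zero, max_eq_right (by linarith : -β ≤ (0:ℝ))]
  · rw [Real.sign_of_pos h]; ring

lemma st_of_le {β : ℝ} (hβ : 0 < β) {u : ℝ} (h : |u| ≤ β) : softThresh β u = 0 := by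
  unfold softThresh
  rw [max_eq_right (by linarith)]; ring

lemma st_of_pos {β : ℝ} (hβ : 0 < β) {u : ℝ} (h : β < u) : softThresh β u = u - β := by
  unfold softThresh
  have hu : 0 < u := lt_trans hβ h
  rw [Real.sign_of_pos hu, abs_of_pos hu, max_eq_left (by linarith)]; ring

lemma st_of_neg {β : ℝ} (hβ : 0 < β) {u : ℝ} (h : u < -β) : softThresh β u = u + β := by
  unfold softThresh
  have hu : u < 0 := by linarith
  rw [Real.sign_of_neg hu, abs_of_neg hu, max_eq_left (by linarith)]; ring

lemma B_nonneg {α β : ℝ} (hα : 0 < α) (hβ : 0 < β) (u w : ℝ) :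
    0 ≤ α / 2 * w ^ 2 + β * |w| + (softThresh β u) ^ 2 / (2 * α) - u * w := by
  rw [st_sq hβ]
  set m := max (|u| - β) 0 with hm
  have hm0 : 0 ≤ m := le_max_right _ _
  have hm1 : |u| - β ≤ m := le_max_left _ _
  have huw : u * w ≤ |u| * |w| := by
    calc u * w ≤ |u * w| := le_abs_self _
    _ = |u| * |w| := abs_mul _ _
  have key : 0 ≤ α ^ 2 * w ^ 2 + 2 * α * β * |w| + m ^ 2 - 2 * α * (u * w) := by
    nlinarith [sq_nonneg (α * |w| - m), abs_nonneg w, sq_abs w,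
      mul_le_mul_of_nonneg_right hm1 (abs_nonneg w), mul_le_mul_of_nonneg_left huw hα.le]
  have e : α / 2 * w ^ 2 + β * |w| + m ^ 2 / (2 * α) - u * w
      = (α ^ 2 * w ^ 2 + 2 * α * β * |w| + m ^ 2 - 2 * α * (u * w)) / (2 * α) := by
    field_simp
  rw [e]
  exact div_nonneg key (by linarith)

lemma decomp {n p : ℕ} (hn : ((n : ℝ)) ≠ 0) (xb : Fin n → Fin p → ℝ) (γ α β : ℝ)
    (hα : α ≠ 0) (w : Fin p → ℝ) (θ : Fin n → ℝ) :
    Pobj xb γ α β w + Dobj xb γ α β θ =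
      (1 / (n : ℝ)) * ∑ i, (ell γ (1 - ∑ j, xb i j * w j) + γ * (θ i) ^ 2 / 2
          - θ i * (1 - ∑ j, xb i j * w j))
      + ∑ j, (α / 2 * (w j) ^ 2 + β * |w j|
          + (softThresh β ((1 / (n : ℝ)) * ∑ i, θ i * xb i j)) ^ 2 / (2 * α)
          - ((1 / (n : ℝ)) * ∑ i, θ i * xb i j) * w j) := by
  have swap : ∑ j, ((1 / (n : ℝ)) * ∑ i, θ i * xb i j) * w j
      = (1 / (n : ℝ)) * ∑ i, θ i * ∑ j, xb i j * w j := by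
    rw [Finset.mul_sum]
    simp only [Finset.sum_mul, Finset.mul_sum]
    rw [Finset.sum_comm]
    exact Finset.sum_congr rfl fun i _ => Finset.sum_congr rfl fun j _ => by ring
  unfold Pobj Dobj
  have e1 : ∀ i, ell γ (1 - ∑ j, xb i j * w j) + γ * θ i ^ 2 / 2
      - θ i * (1 - ∑ j, xb i j * w j)
      = ell γ (1 - ∑ j, xb i j * w j) + (γ / 2) * θ i ^ 2 - θ i
        + θ i * ∑ j, xb i j * w j := fun i => by ring
  have e2 : ∀ j : Fin p, α / 2 * (w j) ^ 2 + β * |w j|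
      + (softThresh β ((1 / (n : ℝ)) * ∑ i, θ i * xb i j)) ^ 2 / (2 * α)
      - ((1 / (n : ℝ)) * ∑ i, θ i * xb i j) * w j
      = (α / 2) * (w j) ^ 2 + β * |w j|
        + (1 / (2 * α)) * (softThresh β ((1 / (n : ℝ)) * ∑ i, θ i * xb i j)) ^ 2
        - ((1 / (n : ℝ)) * ∑ i, θ i * xb i j) * w j := fun j => by
    field_simp
  simp only [e1, e2, Finset.sum_add_distrib, Finset.sum_sub_distrib, ← Finset.mul_sum]
  rw [swap]
  field_simp
  ring

lemma pert {n p : ℕ} (xb : Fin n → Fin p → ℝ) {γ α β : ℝ}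
    (hγ0 : 0 < γ) (hα : 0 < α) (hβ : 0 < β) (wstar : Fin p → ℝ)
    (hw : ∀ w, Pobj xb γ α β wstar ≤ Pobj xb γ α β w) (j : Fin p) (s : ℝ) :
    0 ≤ s * (α * wstar j - (1 / (n : ℝ)) * ∑ i, dl γ (1 - ∑ k, xb i k * wstar k) * xb i j)
      + β * (|wstar j + s| - |wstar j|)
      + ((1 / (n : ℝ)) * (∑ i, (xb i j) ^ 2) / (2 * γ) + α / 2) * s ^ 2 := by
  set w' : Fin p → ℝ := fun k => wstar k + if k = j then s else 0 with hw'
  have hsum : ∀ i, ∑ k, xb i k * w' k = (∑ k, xb i k * wstar k) + xb i j * s := by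
    intro i
    simp only [hw', mul_add, Finset.sum_add_distrib, mul_ite, mul_zero]
    rw [Finset.sum_ite_eq' Finset.univ j (fun k => xb i k * s)]
    simp
  have hsq : ∑ k, (w' k) ^ 2 = ∑ k, (wstar k) ^ 2 + (2 * wstar j * s + s ^ 2) := by
    have e : ∀ k, (w' k) ^ 2 = (wstar k) ^ 2 + (if k = j then 2 * wstar j * s + s ^ 2 else 0) := by
      intro k; by_cases hk : k = j
      · subst hk; simp only [hw', if_true, eq_self_iff_true]; ring
      · simp [hw', hk]
    simp only [e, Finset.sum_add_distrib]
    rw [Finset.sum_ite_eq' Finset.univ j (fun _ => 2 * wstar j * s + s ^ 2)]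
    simp
  have habs : ∑ k, |w' k| = ∑ k, |wstar k| + (|wstar j + s| - |wstar j|) := by
    have e : ∀ k, |w' k| = |wstar k| + (if k = j then |wstar j + s| - |wstar j| else 0) := by
      intro k; by_cases hk : k = j
      · subst hk; simp only [hw', if_true, eq_self_iff_true]; ring
      · simp [hw', hk]
    simp only [e, Finset.sum_add_distrib]
    rw [Finset.sum_ite_eq' Finset.univ j (fun _ => |wstar j + s| - |wstar j|)]
    simp
  have hell : ∀ i, ell γ (1 - ∑ k, xb i k * w' k)
      ≤ ell γ (1 - ∑ k, xb i k * wstar k)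
        + (-s) * (dl γ (1 - ∑ k, xb i k * wstar k) * xb i j)
        + (s ^ 2 / (2 * γ)) * (xb i j) ^ 2 := by
    intro i
    have harg : (1 : ℝ) - ∑ k, xb i k * w' k
        = (1 - ∑ k, xb i k * wstar k) - s * xb i j := by rw [hsum i]; ring
    rw [harg]
    have := smooth hγ0 ((1 - ∑ k, xb i k * wstar k) - s * xb i j) (1 - ∑ k, xb i k * wstar k)
    calc ell γ ((1 - ∑ k, xb i k * wstar k) - s * xb i j) ≤ _ := this
    _ = ell γ (1 - ∑ k, xb i k * wstar k)
        + (-s) * (dl γ (1 - ∑ k, xb i k * wstar k) * xb i j)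
        + (s ^ 2 / (2 * γ)) * (xb i j) ^ 2 := by
      field_simp; ring
  have hsum_le : ∑ i, ell γ (1 - ∑ k, xb i k * w' k)
      ≤ ∑ i, ell γ (1 - ∑ k, xb i k * wstar k)
        + (-s) * (∑ i, dl γ (1 - ∑ k, xb i k * wstar k) * xb i j)
        + (s ^ 2 / (2 * γ)) * ∑ i, (xb i j) ^ 2 := by
    calc ∑ i, ell γ (1 - ∑ k, xb i k * w' k)
        ≤ ∑ i, (ell γ (1 - ∑ k, xb i k * wstar k)
            + (-s) * (dl γ (1 - ∑ k, xb i k * wstar k) * xb i j)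
            + (s ^ 2 / (2 * γ)) * (xb i j) ^ 2) := Finset.sum_le_sum fun i _ => hell i
    _ = _ := by simp only [Finset.sum_add_distrib, ← Finset.mul_sum]
  have hmul := mul_le_mul_of_nonneg_left hsum_le
    (show (0:ℝ) ≤ 1 / (n : ℝ) by positivity)
  have h0 := hw w'
  unfold Pobj at h0
  rw [hsq, habs] at h0
  have e1 : (1:ℝ)/(n:ℝ) * (∑ i, ell γ (1 - ∑ k, xb i k * wstar k)
        + (-s) * (∑ i, dl γ (1 - ∑ k, xb i k * wstar k) * xb i j)
        + (s ^ 2 / (2 * γ)) * ∑ i, (xb i j) ^ 2)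
      = 1/(n:ℝ) * ∑ i, ell γ (1 - ∑ k, xb i k * wstar k)
        + (-s) * (1/(n:ℝ) * ∑ i, dl γ (1 - ∑ k, xb i k * wstar k) * xb i j)
        + s ^ 2 * ((1/(n:ℝ) * ∑ i, (xb i j) ^ 2) / (2 * γ)) := by ring
  rw [e1] at hmul
  have e2 : s * (α * wstar j - (1 / (n : ℝ)) * ∑ i, dl γ (1 - ∑ k, xb i k * wstar k) * xb i j)
      + β * (|wstar j + s| - |wstar j|)
      + ((1 / (n : ℝ)) * (∑ i, (xb i j) ^ 2) / (2 * γ) + α / 2) * s ^ 2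
      = s * (α * wstar j) + (-s) * (1/(n:ℝ) * ∑ i, dl γ (1 - ∑ k, xb i k * wstar k) * xb i j)
        + β * (|wstar j + s| - |wstar j|)
        + s ^ 2 * ((1/(n:ℝ) * ∑ i, (xb i j) ^ 2) / (2 * γ)) + α / 2 * s ^ 2 := by ring
  rw [e2]
  have e3 : α / 2 * (∑ k, (wstar k) ^ 2 + (2 * wstar j * s + s ^ 2))
      = α / 2 * ∑ k, (wstar k) ^ 2 + s * (α * wstar j) + α / 2 * s ^ 2 := by ring
  rw [e3] at h0
  have e4 : β * (∑ k, |wstar k| + (|wstar j + s| - |wstar j|))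
      = β * ∑ k, |wstar k| + β * (|wstar j + s| - |wstar j|) := by ring
  rw [e4] at h0
  linarith [hmul, h0]

lemma aux2 {K c eps : ℝ} (hK : 0 < K) (heps : 0 < eps)
    (h : ∀ s : ℝ, 0 < s → s ≤ eps → 0 ≤ s * c + K * s ^ 2) : 0 ≤ c := by
  refine le_of_not_gt fun hc => ?_
  have h2K : (0:ℝ) < 2 * K := by linarith
  have hd : 0 < -c / (2 * K) := div_pos (by linarith) h2K
  rcases le_total eps (-c / (2 * K)) with hle | hle
  · have h1 := h eps heps le_rfl
    have h2 : K * eps ≤ -c / 2 := by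
      calc K * eps ≤ K * (-c / (2 * K)) := mul_le_mul_of_nonneg_left hle hK.le
      _ = -c / 2 := by field_simp
    nlinarith [mul_le_mul_of_nonneg_right h2 heps.le, mul_pos heps (neg_pos.mpr hc)]
  · have h1 := h (-c / (2 * K)) hd hle
    have h2 : (-c / (2 * K)) * c + K * (-c / (2 * K)) ^ 2 = -(c ^ 2 / (4 * K)) := by
      field_simp; ring
    have h3 : 0 < c ^ 2 / (4 * K) := div_pos (by nlinarith) (by linarith)
    linarith

lemma Bzero {n p : ℕ} (xb : Fin n → Fin p → ℝ) {γ α β : ℝ}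
    (hγ0 : 0 < γ) (hα : 0 < α) (hβ : 0 < β) (wstar : Fin p → ℝ)
    (hw : ∀ w, Pobj xb γ α β wstar ≤ Pobj xb γ α β w) (j : Fin p) :
    α / 2 * (wstar j) ^ 2 + β * |wstar j|
      + (softThresh β ((1 / (n : ℝ)) * ∑ i, dl γ (1 - ∑ k, xb i k * wstar k) * xb i j)) ^ 2 / (2 * α)
      - ((1 / (n : ℝ)) * ∑ i, dl γ (1 - ∑ k, xb i k * wstar k) * xb i j) * wstar j = 0 := by
  set u : ℝ := (1 / (n : ℝ)) * ∑ i, dl γ (1 - ∑ k, xb i k * wstar k) * xb i j with hu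
  set g : ℝ := α * wstar j - u with hg
  set K : ℝ := (1 / (n : ℝ)) * (∑ i, (xb i j) ^ 2) / (2 * γ) + α / 2 with hK
  have hK0 : 0 < K := by
    have h1 : 0 ≤ (1 / (n : ℝ)) * (∑ i, (xb i j) ^ 2) / (2 * γ) := by positivity
    have h2 : 0 < α / 2 := by linarith
    rw [hK]; linarith
  have hpert : ∀ s : ℝ, 0 ≤ s * g + β * (|wstar j + s| - |wstar j|) + K * s ^ 2 :=
    fun s => pert xb hγ0 hα hβ wstar hw j s
  have habs_le : ∀ s : ℝ, |wstar j + s| - |wstar j| ≤ |s| := by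
    intro s
    calc |wstar j + s| - |wstar j| ≤ |(wstar j + s) - wstar j| := abs_sub_abs_le_abs_sub _ _
    _ = |s| := by rw [add_sub_cancel_left]
  have hA1 : 0 ≤ g + β := by
    refine aux2 hK0 one_pos fun r hr _ => ?_
    have h1 := hpert r
    have h2 : β * (|wstar j + r| - |wstar j|) ≤ β * r :=
      mul_le_mul_of_nonneg_left ((habs_le r).trans_eq (abs_of_pos hr)) hβ.le
    nlinarith
  have hA2 : 0 ≤ β - g := by
    refine aux2 hK0 one_pos fun r hr _ => ?_
    have h1 := hpert (-r)
    have h2 : β * (|wstar j + -r| - |wstar j|) ≤ β * r := by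
      refine mul_le_mul_of_nonneg_left ((habs_le (-r)).trans_eq ?_) hβ.le
      rw [abs_neg, abs_of_pos hr]
    nlinarith
  have claimB : 0 < wstar j → g = -β := by
    intro hpos
    have hB : 0 ≤ -(g + β) := by
      refine aux2 hK0 hpos fun r hr hrle => ?_
      have h1 := hpert (-r)
      rw [show wstar j + -r = wstar j - r by ring, abs_of_nonneg (by linarith),
        abs_of_pos hpos] at h1
      nlinarith
    linarith
  have claimC : wstar j < 0 → g = β := by
    intro hneg
    have hC : 0 ≤ g - β := by
      refine aux2 hK0 (neg_pos.mpr hneg) fun r hr hrle => ?_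
      have h1 := hpert r
      rw [abs_of_nonpos (by linarith), abs_of_neg hneg] at h1
      nlinarith
    linarith
  rcases lt_trichotomy (wstar j) 0 with hc | hc | hc
  · have hgβ : g = β := claimC hc
    have huv : u = α * wstar j - β := by rw [hg] at hgβ; linarith
    have hult : u < -β := by nlinarith
    rw [st_of_neg hβ hult, abs_of_neg hc, huv]
    field_simp; ring
  · have hub : |u| ≤ β := by
      rw [abs_le]
      constructor
      · have := hA2; rw [hg, hc] at this; simp only [mul_zero, zero_sub] at this; linarith
      · have := hA1; rw [hg, hc] at this; simp only [mul_zero, zero_sub] at this; linarith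
    rw [st_of_le hβ hub, hc]
    simp
  · have hgβ : g = -β := claimB hc
    have huv : u = α * wstar j + β := by rw [hg] at hgβ; linarith
    have hult : β < u := by nlinarith
    rw [st_of_pos hβ hult, abs_of_pos hc, huv]
    field_simp; ring

theorem exact_feature_screening {n p : ℕ} (hn : 0 < n) (hp : 0 < p)
    (xb : Fin n → Fin p → ℝ) (γ : ℝ) (hγ0 : 0 < γ) (hγ1 : γ < 1)
    (α β : ℝ) (hα : 0 < α) (hβ : 0 < β)
    (wstar : Fin p → ℝ) (θstar : Fin n → ℝ)
    (hw : ∀ w, Pobj xb γ α β wstar ≤ Pobj xb γ α β w)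
    (hθbox : ∀ i, 0 ≤ θstar i ∧ θstar i ≤ 1)
    (hθ : ∀ θ : Fin n → ℝ, (∀ i, 0 ≤ θ i ∧ θ i ≤ 1) →
      Dobj xb γ α β θstar ≤ Dobj xb γ α β θ) :
    ∀ j, (1 / (n : ℝ)) * |∑ i, θstar i * xb i j| ≤ β → wstar j = 0 := by
  have hNeq : ((n : ℝ)) ≠ 0 := Nat.cast_ne_zero.mpr hn.ne'
  set θt : Fin n → ℝ := fun i => dl γ (1 - ∑ k, xb i k * wstar k) with hθt
  have hbox' : ∀ i, 0 ≤ θt i ∧ θt i ≤ 1 :=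
    fun i => ⟨dl_nonneg hγ0 _, dl_le_one hγ0 _⟩
  have hPD0 : Pobj xb γ α β wstar + Dobj xb γ α β θt = 0 := by
    rw [decomp hNeq xb γ α β hα.ne' wstar θt]
    have hA : ∀ i ∈ Finset.univ, ell γ (1 - ∑ j, xb i j * wstar j) + γ * (θt i) ^ 2 / 2
        - θt i * (1 - ∑ j, xb i j * wstar j) = 0 := fun i _ => fenchel_eq hγ0 _
    have hB : ∀ j ∈ Finset.univ, α / 2 * (wstar j) ^ 2 + β * |wstar j|
        + (softThresh β ((1 / (n : ℝ)) * ∑ i, θt i * xb i j)) ^ 2 / (2 * α)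
        - ((1 / (n : ℝ)) * ∑ i, θt i * xb i j) * wstar j = 0 :=
      fun j _ => Bzero xb hγ0 hα hβ wstar hw j
    rw [Finset.sum_eq_zero hA, Finset.sum_eq_zero hB]
    simp
  have hle : Pobj xb γ α β wstar + Dobj xb γ α β θstar ≤ 0 := by
    have := hθ θt hbox'
    linarith
  rw [decomp hNeq xb γ α β hα.ne' wstar θstar] at hle
  intro j hj
  have hAs : 0 ≤ ∑ i, (ell γ (1 - ∑ j, xb i j * wstar j) + γ * (θstar i) ^ 2 / 2
      - θstar i * (1 - ∑ j, xb i j * wstar j)) :=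
    Finset.sum_nonneg fun i _ => fenchelA hγ0 _ _ (hθbox i).1 (hθbox i).2
  have hsumB : ∑ j', (α / 2 * (wstar j') ^ 2 + β * |wstar j'|
      + (softThresh β ((1 / (n : ℝ)) * ∑ i, θstar i * xb i j')) ^ 2 / (2 * α)
      - ((1 / (n : ℝ)) * ∑ i, θstar i * xb i j') * wstar j') ≤ 0 := by
    have h1 : 0 ≤ (1 / (n : ℝ)) * ∑ i, (ell γ (1 - ∑ j, xb i j * wstar j)
        + γ * (θstar i) ^ 2 / 2 - θstar i * (1 - ∑ j, xb i j * wstar j)) :=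
      mul_nonneg (by positivity) hAs
    linarith
  have hBj : α / 2 * (wstar j) ^ 2 + β * |wstar j|
      + (softThresh β ((1 / (n : ℝ)) * ∑ i, θstar i * xb i j)) ^ 2 / (2 * α)
      - ((1 / (n : ℝ)) * ∑ i, θstar i * xb i j) * wstar j ≤ 0 := by
    have := Finset.single_le_sum (f := fun j' => α / 2 * (wstar j') ^ 2 + β * |wstar j'|
      + (softThresh β ((1 / (n : ℝ)) * ∑ i, θstar i * xb i j')) ^ 2 / (2 * α)
      - ((1 / (n : ℝ)) * ∑ i, θstar i * xb i j') * wstar j')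
      (fun j' _ => B_nonneg hα hβ _ _) (Finset.mem_univ j)
    linarith
  set u : ℝ := (1 / (n : ℝ)) * ∑ i, θstar i * xb i j with hu
  have hub : |u| ≤ β := by
    rw [hu, abs_mul, abs_of_nonneg (show (0:ℝ) ≤ 1 / (n:ℝ) by positivity)]
    exact hj
  rw [st_of_le hβ hub] at hBj
  have huw : u * wstar j ≤ β * |wstar j| := by
    calc u * wstar j ≤ |u * wstar j| := le_abs_self _
    _ = |u| * |wstar j| := abs_mul _ _
    _ ≤ β * |wstar j| := mul_le_mul_of_nonneg_right hub (abs_nonneg _)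
  have hsq : (wstar j) ^ 2 = 0 := by
    have hle2 : (wstar j) ^ 2 ≤ 0 := by
      have h0 : (0:ℝ) ^ 2 / (2 * α) = 0 := by simp
      nlinarith
    exact le_antisymm hle2 (sq_nonneg _)
  exact pow_eq_zero_iff two_ne_zero |>.mp hsq
end

section
/- Primal optimum ball estimate without priors: let α₀ > 0, α > 0, β₀ > 0, and let w*(α₀, β₀) minimize P(·; α₀, β₀) over ℝ^p and w*(α, β₀) minimize P(·; α, β₀) over ℝ^p. Then ‖w*(α, β₀) − ((α₀ + α)/(2α))·w*(α₀, β₀)‖² ≤ ((α − α₀)²/(4α²))·‖w*(α₀, β₀)‖². -/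
open Finset

open Set Filter Asymptotics in
lemma sq_littleo : (fun s : ℝ => s ^ 2) =o[nhds 0] fun s => s := by
  rw [Asymptotics.isLittleO_iff]
  intro c hc
  filter_upwards [Metric.ball_mem_nhds (0:ℝ) hc] with s hs
  rw [Metric.mem_ball, Real.dist_eq, sub_zero] at hs
  rw [Real.norm_eq_abs, Real.norm_eq_abs]
  calc |s ^ 2| = |s| * |s| := by rw [sq, abs_mul]
    _ ≤ c * |s| := by nlinarith [abs_nonneg s]

lemma ell_nonneg (γ : ℝ) (hγ : 0 < γ) (t : ℝ) : 0 ≤ ell γ t := by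
  unfold ell
  split_ifs with h1 h2
  · exact le_rfl
  · positivity
  · push_neg at h1 h2; nlinarith

open Set Filter Asymptotics in
lemma ell_hasDerivAt (γ : ℝ) (hγ : 0 < γ) (t : ℝ) :
    HasDerivAt (ell γ) (max 0 (min (t / γ) 1)) t := by
  have hell0 : ell γ 0 = 0 := by simp [ell, hγ.le]
  rcases lt_trichotomy t 0 with h | h | h
  · have hd : max 0 (min (t / γ) 1) = 0 := by
      rw [max_eq_left]
      exact le_trans (min_le_left _ _) (div_neg_of_neg_of_pos h hγ).le
    rw [hd]
    apply (hasDerivAt_const t (0:ℝ)).congr_of_eventuallyEq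
    filter_upwards [Iio_mem_nhds h] with s hs
    rw [Set.mem_Iio] at hs
    simp [ell, hs]
  · subst h
    have hd : max 0 (min ((0:ℝ) / γ) 1) = 0 := by
      rw [zero_div]; simp
    rw [hd, hasDerivAt_iff_isLittleO]
    simp only [hell0, sub_zero, smul_zero]
    have hO : (fun s : ℝ => ell γ s) =O[nhds 0] (fun s => s ^ 2) :=
      Asymptotics.IsBigO.of_bound (1 / (2 * γ)) (Eventually.of_forall (fun s => by
        rw [Real.norm_eq_abs, Real.norm_eq_abs, abs_of_nonneg (ell_nonneg γ hγ s),
          abs_of_nonneg (sq_nonneg s)]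
        unfold ell
        split_ifs with h1 h2
        · positivity
        · exact le_of_eq (by ring)
        · push_neg at h1 h2
          have heq : 1 / (2 * γ) * s ^ 2 - (s - γ / 2) = (s - γ)^2 / (2*γ) := by
            field_simp; ring
          rw [← sub_nonneg, heq]
          positivity))
    exact hO.trans_isLittleO sq_littleo
  · rcases lt_trichotomy t γ with h2 | h2 | h2
    · have hd : max 0 (min (t / γ) 1) = t / γ := by
        rw [min_eq_left (by rw [div_le_one hγ]; linarith), max_eq_right (by positivity)]
      rw [hd]
      have hder : HasDerivAt (fun s : ℝ => s ^ 2 / (2 * γ)) (t / γ) t := by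
        have := (hasDerivAt_pow 2 t).div_const (2 * γ)
        refine this.congr_deriv ?_
        norm_num
        field_simp
      apply hder.congr_of_eventuallyEq
      filter_upwards [Ioo_mem_nhds h h2] with s hs
      simp [ell, not_lt.mpr hs.1.le, hs.2.le]
    · subst h2
      have hd : max 0 (min (t / t) 1) = 1 := by
        rw [div_self hγ.ne']; simp
      rw [hd, hasDerivAt_iff_isLittleO]
      have hellt : ell t t = t / 2 := by
        simp only [ell, if_neg (not_lt.mpr hγ.le), if_pos le_rfl]
        field_simp
      have hO : (fun s : ℝ => ell t s - ell t t - (s - t) • (1:ℝ)) =O[nhds t]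
          (fun s => (s - t) ^ 2) := by
        apply Asymptotics.IsBigO.of_bound (1 / (2 * t))
        filter_upwards [Ioi_mem_nhds hγ] with s hs
        rw [Set.mem_Ioi] at hs
        rw [smul_eq_mul, mul_one, hellt, Real.norm_eq_abs, Real.norm_eq_abs,
          abs_of_nonneg (sq_nonneg (s - t))]
        rcases le_or_gt s t with h3 | h3
        · have hes : ell t s = s ^ 2 / (2 * t) := by simp [ell, not_lt.mpr hs.le, h3]
          rw [hes]
          have heq : s ^ 2 / (2 * t) - t / 2 - (s - t) = (s - t) ^ 2 / (2 * t) := by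
            field_simp; ring
          rw [heq, abs_of_nonneg (by positivity : (0:ℝ) ≤ (s - t) ^ 2 / (2 * t))]
          exact le_of_eq (by ring)
        · have hes : ell t s = s - t / 2 := by
            simp [ell, not_lt.mpr (by linarith : (0:ℝ) ≤ s), not_le.mpr h3]
          rw [hes]
          have heq : s - t / 2 - t / 2 - (s - t) = 0 := by ring
          rw [heq, abs_zero]
          positivity
      have hlo : (fun s : ℝ => (s - t) ^ 2) =o[nhds t] (fun s => s - t) := by
        have ht : Tendsto (fun s : ℝ => s - t) (nhds t) (nhds 0) := by
          have := (continuous_id.sub (continuous_const (y := t))).tendsto t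
          simpa [Pi.sub_def] using this
        exact sq_littleo.comp_tendsto ht
      exact hO.trans_isLittleO hlo
    · have hd : max 0 (min (t / γ) 1) = 1 := by
        rw [min_eq_right (by rw [le_div_iff₀ hγ]; linarith), max_eq_right zero_le_one]
      rw [hd]
      apply ((hasDerivAt_id t).sub_const (γ / 2)).congr_of_eventuallyEq
      filter_upwards [Ioi_mem_nhds h2] with s hs
      rw [Set.mem_Ioi] at hs
      simp [ell, not_lt.mpr (by linarith : (0:ℝ) ≤ s), not_le.mpr hs]

lemma ell_convexOn (γ : ℝ) (hγ : 0 < γ) : ConvexOn ℝ Set.univ (ell γ) := by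
  have hdiff : Differentiable ℝ (ell γ) := fun t => (ell_hasDerivAt γ hγ t).differentiableAt
  apply Monotone.convexOn_univ_of_deriv hdiff
  have hderiv : deriv (ell γ) = fun t => max 0 (min (t / γ) 1) :=
    funext fun t => (ell_hasDerivAt γ hγ t).deriv
  rw [hderiv]
  intro a b hab
  exact max_le_max le_rfl (min_le_min (by gcongr) le_rfl)

lemma strong_min {n p : ℕ} (xb : Fin n → Fin p → ℝ) (γ α β : ℝ) (hγ : 0 < γ)
    (hα : 0 < α) (hβ : 0 ≤ β) (ws : Fin p → ℝ)
    (hmin : ∀ w, Pobj xb γ α β ws ≤ Pobj xb γ α β w) (w : Fin p → ℝ) :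
    Pobj xb γ α β ws + (α / 2) * ∑ j, (w j - ws j) ^ 2 ≤ Pobj xb γ α β w := by
  set d := ∑ j, (w j - ws j) ^ 2 with hd
  have hd0 : 0 ≤ d := Finset.sum_nonneg fun j _ => sq_nonneg _
  -- key inequality for all t ∈ (0,1]
  have key : ∀ t : ℝ, 0 < t → t ≤ 1 →
      Pobj xb γ α β ws + (α / 2) * (1 - t) * d ≤ Pobj xb γ α β w := by
    intro t ht0 ht1
    set mix : Fin p → ℝ := fun j => (1 - t) * ws j + t * w j with hmix
    have hconv := ell_convexOn γ hγ
    have hloss : ∀ i, ell γ (1 - ∑ j, xb i j * mix j) ≤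
        (1 - t) * ell γ (1 - ∑ j, xb i j * ws j) + t * ell γ (1 - ∑ j, xb i j * w j) := by
      intro i
      have hsum : ∑ j, xb i j * mix j
          = (1 - t) * ∑ j, xb i j * ws j + t * ∑ j, xb i j * w j := by
        rw [Finset.mul_sum, Finset.mul_sum, ← Finset.sum_add_distrib]
        exact Finset.sum_congr rfl fun j _ => by simp only [hmix]; ring
      have haff : 1 - ∑ j, xb i j * mix j
          = (1 - t) * (1 - ∑ j, xb i j * ws j) + t * (1 - ∑ j, xb i j * w j) := by
        rw [hsum]; ring
      rw [haff]
      have := hconv.2 (Set.mem_univ (1 - ∑ j, xb i j * ws j))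
        (Set.mem_univ (1 - ∑ j, xb i j * w j)) (by linarith : (0:ℝ) ≤ 1 - t) ht0.le
        (by ring : (1 - t) + t = 1)
      simpa using this
    have h1 : (1 / (n:ℝ)) * ∑ i, ell γ (1 - ∑ j, xb i j * mix j)
        ≤ (1 / (n:ℝ)) * ((1 - t) * ∑ i, ell γ (1 - ∑ j, xb i j * ws j)
            + t * ∑ i, ell γ (1 - ∑ j, xb i j * w j)) := by
      apply mul_le_mul_of_nonneg_left _ (by positivity)
      calc ∑ i, ell γ (1 - ∑ j, xb i j * mix j)
          ≤ ∑ i, ((1 - t) * ell γ (1 - ∑ j, xb i j * ws j)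
              + t * ell γ (1 - ∑ j, xb i j * w j)) := Finset.sum_le_sum fun i _ => hloss i
        _ = _ := by rw [Finset.sum_add_distrib, ← Finset.mul_sum, ← Finset.mul_sum]
    have hquad : ∑ j, mix j ^ 2
        = (1 - t) * ∑ j, ws j ^ 2 + t * ∑ j, w j ^ 2 - t * (1 - t) * d := by
      rw [hd]
      calc ∑ j, mix j ^ 2
          = ∑ j, ((1 - t) * ws j ^ 2 + t * w j ^ 2 - t * (1 - t) * (w j - ws j) ^ 2) :=
            Finset.sum_congr rfl fun j _ => by simp only [hmix]; ring
        _ = _ := by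
            rw [Finset.sum_sub_distrib, Finset.sum_add_distrib, ← Finset.mul_sum,
              ← Finset.mul_sum, ← Finset.mul_sum]
    have h2 : (α / 2) * ∑ j, mix j ^ 2
        = (α / 2) * ((1 - t) * ∑ j, ws j ^ 2 + t * ∑ j, w j ^ 2 - t * (1 - t) * d) := by
      rw [hquad]
    have h3 : β * ∑ j, |mix j| ≤ β * ((1 - t) * ∑ j, |ws j| + t * ∑ j, |w j|) := by
      apply mul_le_mul_of_nonneg_left _ hβ
      rw [Finset.mul_sum, Finset.mul_sum, ← Finset.sum_add_distrib]
      apply Finset.sum_le_sum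
      intro j _
      calc |mix j| ≤ |(1 - t) * ws j| + |t * w j| := abs_add_le _ _
        _ = (1 - t) * |ws j| + t * |w j| := by
            rw [abs_mul, abs_mul, abs_of_nonneg (by linarith : (0:ℝ) ≤ 1 - t),
              abs_of_nonneg ht0.le]
    have hmid : Pobj xb γ α β mix
        ≤ (1 - t) * Pobj xb γ α β ws + t * Pobj xb γ α β w - (α / 2) * t * (1 - t) * d := by
      simp only [Pobj]
      nlinarith [h1, h2, h3]
    have hlow := hmin mix
    have h' : t * (Pobj xb γ α β ws + (α / 2) * (1 - t) * d) ≤ t * Pobj xb γ α β w := by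
      nlinarith [hlow, hmid]
    have := le_of_mul_le_mul_left (by linarith [h'] : t * (Pobj xb γ α β ws + (α / 2) * (1 - t) * d) ≤ t * Pobj xb γ α β w) ht0
    linarith [this]
  -- epsilon argument
  apply le_of_forall_pos_le_add
  intro ε hε
  set c := (α / 2) * d with hc
  have hc0 : 0 ≤ c := by positivity
  have hcp : (0:ℝ) < c + 1 := by linarith
  set t := min 1 (ε / (c + 1)) with htdef
  have ht0 : 0 < t := lt_min one_pos (div_pos hε hcp)
  have ht1 : t ≤ 1 := min_le_left _ _
  have htc : t * (c + 1) ≤ ε := by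
    rw [← le_div_iff₀ hcp]
    exact min_le_right _ _
  have hk := key t ht0 ht1
  have : (α / 2) * (1 - t) * d = c - t * c := by rw [hc]; ring
  rw [this] at hk
  nlinarith [hk, htc, ht0, hc0]

theorem primal_ball_estimate {n p : ℕ} (hn : 0 < n) (hp : 0 < p)
    (xb : Fin n → Fin p → ℝ) (γ : ℝ) (hγ0 : 0 < γ) (hγ1 : γ < 1)
    (α₀ α β₀ : ℝ) (hα₀ : 0 < α₀) (hα : 0 < α) (hβ₀ : 0 < β₀)
    (w0 wa : Fin p → ℝ)
    (hw0 : ∀ w, Pobj xb γ α₀ β₀ w0 ≤ Pobj xb γ α₀ β₀ w)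
    (hwa : ∀ w, Pobj xb γ α β₀ wa ≤ Pobj xb γ α β₀ w) :
    ∑ j, (wa j - ((α₀ + α) / (2 * α)) * w0 j) ^ 2
      ≤ ((α - α₀) ^ 2 / (4 * α ^ 2)) * ∑ j, w0 j ^ 2 := by
  have key0 := strong_min xb γ α₀ β₀ hγ0 hα₀ hβ₀.le w0 hw0 wa
  have keya := strong_min xb γ α β₀ hγ0 hα hβ₀.le wa hwa w0
  have hsym : ∑ j, (w0 j - wa j) ^ 2 = ∑ j, (wa j - w0 j) ^ 2 :=
    Finset.sum_congr rfl fun j _ => by ring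
  rw [hsym] at keya
  set Qa := ∑ j, wa j ^ 2 with hQa
  set Q0 := ∑ j, w0 j ^ 2 with hQ0
  set S := ∑ j, wa j * w0 j with hS
  have hD : ∑ j, (wa j - w0 j) ^ 2 = Qa - 2 * S + Q0 := by
    rw [hQa, hQ0, hS]
    calc ∑ j, (wa j - w0 j) ^ 2
        = ∑ j, (wa j ^ 2 + w0 j ^ 2 - 2 * (wa j * w0 j)) :=
          Finset.sum_congr rfl fun j _ => by ring
      _ = _ := by
          rw [Finset.sum_sub_distrib, Finset.sum_add_distrib, ← Finset.mul_sum]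
          ring
  -- combined optimality inequality
  have K : 2 * α * Qa - 2 * (α₀ + α) * S + 2 * α₀ * Q0 ≤ 0 := by
    simp only [Pobj] at key0 keya
    rw [hD] at key0 keya
    rw [← hQa, ← hQ0] at key0 keya
    nlinarith [key0, keya]
  have hT : ∑ j, (wa j - ((α₀ + α) / (2 * α)) * w0 j) ^ 2
      = Qa - 2 * ((α₀ + α) / (2 * α)) * S + ((α₀ + α) / (2 * α)) ^ 2 * Q0 := by
    rw [hQa, hQ0, hS]
    calc ∑ j, (wa j - ((α₀ + α) / (2 * α)) * w0 j) ^ 2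
        = ∑ j, (wa j ^ 2 + ((α₀ + α) / (2 * α)) ^ 2 * w0 j ^ 2
            - 2 * ((α₀ + α) / (2 * α)) * (wa j * w0 j)) :=
          Finset.sum_congr rfl fun j _ => by ring
      _ = _ := by
          rw [Finset.sum_sub_distrib, Finset.sum_add_distrib, ← Finset.mul_sum,
            ← Finset.mul_sum]
          ring
  rw [hT, div_mul_eq_mul_div, le_div_iff₀ (by positivity : (0:ℝ) < 4 * α ^ 2)]
  have hexp : (Qa - 2 * ((α₀ + α) / (2 * α)) * S + ((α₀ + α) / (2 * α)) ^ 2 * Q0)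
      * (4 * α ^ 2)
      = 4 * α ^ 2 * Qa - 4 * α * (α₀ + α) * S + (α₀ + α) ^ 2 * Q0 := by
    field_simp
    ring
  rw [hexp]
  have K' := mul_le_mul_of_nonneg_left K hα.le
  rw [mul_zero] at K'
  nlinarith [K']
end

section
/- Primal optimum estimation with feature priors (Lemma 5): let α₀ > 0, α > 0, β₀ > 0, and let w*(α₀, β₀) minimize P(·; α₀, β₀) over ℝ^p and w*(α, β₀) minimize P(·; α, β₀) over ℝ^p. Let F̂ ⊆ {1, …, p} be such that [w*(α, β₀)]_j = 0 for every j ∈ F̂, and set F̂^c = {1, …, p} \ F̂. Then ‖[w*(α, β₀)]_{F̂^c} − ((α₀ + α)/(2α))·[w*(α₀, β₀)]_{F̂^c}‖² ≤ ((α₀ − α)²/(4α²))·‖w*(α₀, β₀)‖² − ((α₀ + α)²/(4α²))·‖[w*(α₀, β₀)]_{F̂}‖². -/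
open Finset

lemma ell_support {γ : ℝ} (hγ : 0 < γ) (s t : ℝ) :
    ell γ s + (if s < 0 then 0 else if s ≤ γ then s / γ else 1) * (t - s) ≤ ell γ t := by
  have hne : γ ≠ 0 := ne_of_gt hγ
  have h2γ : (0:ℝ) < 2 * γ := by linarith
  unfold ell
  split_ifs with h1 h2 h3 h4 h5 h6 h7 h8 <;> try push_neg at *
  · linarith
  · have : (0:ℝ) ≤ t ^ 2 / (2 * γ) := by positivity
    linarith
  · linarith
  · have e : s ^ 2 / (2 * γ) + s / γ * (t - s) = (s ^ 2 + 2 * s * (t - s)) / (2 * γ) := by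
      field_simp
    rw [e]
    apply div_nonpos_of_nonpos_of_nonneg _ h2γ.le
    nlinarith
  · have e : s ^ 2 / (2 * γ) + s / γ * (t - s) = (s ^ 2 + 2 * s * (t - s)) / (2 * γ) := by
      field_simp
    rw [e]
    gcongr
    nlinarith [sq_nonneg (t - s)]
  · have e : s ^ 2 / (2 * γ) + s / γ * (t - s) = (s ^ 2 + 2 * s * (t - s)) / (2 * γ) := by
      field_simp
    rw [e, div_le_iff₀ h2γ]
    nlinarith [mul_nonneg (sub_nonneg.2 h4) (by linarith : (0:ℝ) ≤ 2 * t - γ - s)]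
  · linarith
  · rw [le_div_iff₀ h2γ]
    nlinarith [sq_nonneg (t - γ)]
  · linarith

lemma ell_convex {γ : ℝ} (hγ : 0 < γ) {a b : ℝ} (ha : 0 ≤ a) (hb : 0 ≤ b) (hab : a + b = 1)
    (x y : ℝ) : ell γ (a * x + b * y) ≤ a * ell γ x + b * ell γ y := by
  set z := a * x + b * y with hz
  set d := (if z < 0 then (0:ℝ) else if z ≤ γ then z / γ else 1) with hd
  have h1 := ell_support hγ z x
  have h2 := ell_support hγ z y
  rw [← hd] at h1 h2
  have h1' := mul_le_mul_of_nonneg_left h1 ha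
  have h2' := mul_le_mul_of_nonneg_left h2 hb
  have key : a * (d * (x - z)) + b * (d * (y - z)) = 0 := by
    have : a * (x - z) + b * (y - z) = 0 := by rw [hz]; linear_combination (-(a * x) - b * y) * hab
    calc a * (d * (x - z)) + b * (d * (y - z)) = d * (a * (x - z) + b * (y - z)) := by ring
      _ = 0 := by rw [this, mul_zero]
  have hez : a * ell γ z + b * ell γ z = ell γ z := by
    have : (a + b) * ell γ z = ell γ z := by rw [hab, one_mul]
    linarith [this]
  nlinarith [h1', h2', key, hez]

/-- Segment (convexity) inequality for the α = 0 objective. -/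
lemma G_segment {n p : ℕ} (xb : Fin n → Fin p → ℝ) {γ β : ℝ} (hγ : 0 < γ) (hβ : 0 ≤ β)
    (u v : Fin p → ℝ) {a b : ℝ} (ha : 0 ≤ a) (hb : 0 ≤ b) (hab : a + b = 1) :
    Pobj xb γ 0 β (fun j => a * u j + b * v j)
      ≤ a * Pobj xb γ 0 β u + b * Pobj xb γ 0 β v := by
  have hn' : (0:ℝ) ≤ 1 / (n : ℝ) := by positivity
  unfold Pobj
  have hlin : ∀ i : Fin n, 1 - ∑ j, xb i j * (a * u j + b * v j)
      = a * (1 - ∑ j, xb i j * u j) + b * (1 - ∑ j, xb i j * v j) := by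
    intro i
    have : ∑ j, xb i j * (a * u j + b * v j)
        = a * ∑ j, xb i j * u j + b * ∑ j, xb i j * v j := by
      rw [Finset.mul_sum, Finset.mul_sum, ← Finset.sum_add_distrib]
      exact Finset.sum_congr rfl fun j _ => by ring
    rw [this]; linarith
  have hloss : ∑ i, ell γ (1 - ∑ j, xb i j * (a * u j + b * v j))
      ≤ a * ∑ i, ell γ (1 - ∑ j, xb i j * u j) + b * ∑ i, ell γ (1 - ∑ j, xb i j * v j) := by
    rw [Finset.mul_sum, Finset.mul_sum, ← Finset.sum_add_distrib]
    apply Finset.sum_le_sum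
    intro i _
    rw [hlin i]
    exact ell_convex hγ ha hb hab _ _
  have habs : ∑ j, |a * u j + b * v j| ≤ a * ∑ j, |u j| + b * ∑ j, |v j| := by
    rw [Finset.mul_sum, Finset.mul_sum, ← Finset.sum_add_distrib]
    apply Finset.sum_le_sum
    intro j _
    calc |a * u j + b * v j| ≤ |a * u j| + |b * v j| := abs_add_le _ _
      _ = a * |u j| + b * |v j| := by
          rw [abs_mul, abs_mul, abs_of_nonneg ha, abs_of_nonneg hb]
  have t1 := mul_le_mul_of_nonneg_left hloss hn'
  have t2 := mul_le_mul_of_nonneg_left habs hβ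
  ring_nf
  ring_nf at t1 t2
  nlinarith [t1, t2]

lemma Pobj_decomp {n p : ℕ} (xb : Fin n → Fin p → ℝ) (γ α β : ℝ) (w : Fin p → ℝ) :
    Pobj xb γ α β w = Pobj xb γ 0 β w + (α / 2) * ∑ j, w j ^ 2 := by
  unfold Pobj; ring

/-- First-order optimality: if `u` minimizes `P(·; α, β)` then the directional
derivative condition `α⟨u, u - v⟩ ≤ G v - G u` holds, where `G = P(·; 0, β)`. -/
lemma opt_dir {n p : ℕ} (xb : Fin n → Fin p → ℝ) {γ β α : ℝ} (hγ : 0 < γ) (hβ : 0 ≤ β)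
    (hα : 0 < α) (u v : Fin p → ℝ)
    (hu : ∀ w, Pobj xb γ α β u ≤ Pobj xb γ α β w) :
    α * (∑ j, u j ^ 2 - ∑ j, u j * v j) ≤ Pobj xb γ 0 β v - Pobj xb γ 0 β u := by
  set Gu := Pobj xb γ 0 β u with hGu
  set Gv := Pobj xb γ 0 β v with hGv
  set Qa := ∑ j, u j ^ 2 with hQa
  set I := ∑ j, u j * v j with hI
  set S := ∑ j, u j * (v j - u j) with hS
  set D := ∑ j, (v j - u j) ^ 2 with hD
  have hSI : S = I - Qa := by
    rw [hS, hI, hQa, ← Finset.sum_sub_distrib]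
    exact Finset.sum_congr rfl fun j _ => by ring
  have hD0 : 0 ≤ D := Finset.sum_nonneg fun j _ => sq_nonneg _
  have key : ∀ t : ℝ, 0 < t → t ≤ 1 → Gu - Gv - α * S - α / 2 * t * D ≤ 0 := by
    intro t ht0 ht1
    have h1 := hu (fun j => (1 - t) * u j + t * v j)
    rw [Pobj_decomp xb γ α β u, Pobj_decomp xb γ α β (fun j => (1 - t) * u j + t * v j)] at h1
    have hseg := G_segment xb hγ hβ u v (by linarith : (0:ℝ) ≤ 1 - t) ht0.le
      (by ring : (1 - t) + t = 1)
    have hQwt : ∑ j, ((1 - t) * u j + t * v j) ^ 2 = Qa + 2 * t * S + t ^ 2 * D := by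
      rw [hQa, hS, hD, Finset.mul_sum, Finset.mul_sum, ← Finset.sum_add_distrib,
        ← Finset.sum_add_distrib]
      exact Finset.sum_congr rfl fun j _ => by ring
    rw [hQwt] at h1
    rw [← hQa] at h1
    have h2 : t * (Gu - Gv - α * S - α / 2 * t * D) ≤ t * 0 := by nlinarith [h1, hseg]
    exact le_of_mul_le_mul_left h2 ht0
  have main : Gu - Gv - α * S ≤ 0 := by
    apply le_of_forall_pos_le_add
    intro ε hε
    rw [zero_add]
    set c := α / 2 * D with hc
    have hc0 : 0 ≤ c := by positivity
    set t := min 1 (ε / (c + ε)) with ht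
    have ht0 : 0 < t := lt_min one_pos (div_pos hε (by linarith))
    have ht1 : t ≤ 1 := min_le_left _ _
    have h4 := key t ht0 ht1
    have h5 : α / 2 * t * D ≤ ε := by
      have h6 : t ≤ ε / (c + ε) := min_le_right _ _
      have h7 : t * c ≤ ε / (c + ε) * c := mul_le_mul_of_nonneg_right h6 hc0
      have h8 : ε / (c + ε) * c ≤ ε := by
        rw [div_mul_eq_mul_div, div_le_iff₀ (by linarith : (0:ℝ) < c + ε)]
        nlinarith
      calc α / 2 * t * D = t * c := by rw [hc]; ring
        _ ≤ ε := le_trans h7 h8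
    linarith
  have hAS : α * S = α * I - α * Qa := by rw [hSI]; ring
  have hgoal : α * (Qa - I) = α * Qa - α * I := by ring
  rw [hgoal]
  linarith [main, hAS]

theorem primal_ball_estimate_with_priors {n p : ℕ} (hn : 0 < n) (hp : 0 < p)
    (xb : Fin n → Fin p → ℝ) (γ : ℝ) (hγ0 : 0 < γ) (hγ1 : γ < 1)
    (α₀ α β₀ : ℝ) (hα₀ : 0 < α₀) (hα : 0 < α) (hβ₀ : 0 < β₀)
    (w0 wa : Fin p → ℝ)
    (hw0 : ∀ w, Pobj xb γ α₀ β₀ w0 ≤ Pobj xb γ α₀ β₀ w)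
    (hwa : ∀ w, Pobj xb γ α β₀ wa ≤ Pobj xb γ α β₀ w)
    (F : Finset (Fin p)) (hF : ∀ j ∈ F, wa j = 0) :
    ∑ j ∈ Fᶜ, (wa j - ((α₀ + α) / (2 * α)) * w0 j) ^ 2
      ≤ ((α₀ - α) ^ 2 / (4 * α ^ 2)) * ∑ j, w0 j ^ 2
        - ((α₀ + α) ^ 2 / (4 * α ^ 2)) * ∑ j ∈ F, w0 j ^ 2 := by
  have hαne : α ≠ 0 := hα.ne'
  set Qa := ∑ j, wa j ^ 2 with hQa
  set Q0 := ∑ j, w0 j ^ 2 with hQ0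
  set I := ∑ j, wa j * w0 j with hI
  -- first-order conditions
  have A := opt_dir xb hγ0 hβ₀.le hα wa w0 hwa
  have B := opt_dir xb hγ0 hβ₀.le hα₀ w0 wa hw0
  have hIc : ∑ j, w0 j * wa j = I := Finset.sum_congr rfl fun j _ => mul_comm _ _
  rw [hIc] at B
  rw [← hQa, ← hI] at A
  rw [← hQ0] at B
  have hkey : α * Qa - (α₀ + α) * I + α₀ * Q0 ≤ 0 := by nlinarith [A, B]
  -- expansion of the full-sum quadratic
  set c := (α₀ + α) / (2 * α) with hc
  have hterm : ∀ j : Fin p, (wa j - c * w0 j) ^ 2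
      = (2 * α * wa j - (α₀ + α) * w0 j) ^ 2 / (4 * α ^ 2) := by
    intro j; rw [hc]; field_simp; ring
  have hT : ∑ j, (2 * α * wa j - (α₀ + α) * w0 j) ^ 2
      = 4 * α ^ 2 * Qa - 4 * α * (α₀ + α) * I + (α₀ + α) ^ 2 * Q0 := by
    rw [hQa, hI, hQ0, Finset.mul_sum, Finset.mul_sum, Finset.mul_sum,
      ← Finset.sum_sub_distrib, ← Finset.sum_add_distrib]
    exact Finset.sum_congr rfl fun j _ => by ring
  have hmul := mul_le_mul_of_nonneg_left hkey (by positivity : (0:ℝ) ≤ 4 * α)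
  have main : ∑ j, (wa j - c * w0 j) ^ 2 ≤ (α₀ - α) ^ 2 / (4 * α ^ 2) * Q0 := by
    calc ∑ j, (wa j - c * w0 j) ^ 2
        = (∑ j, (2 * α * wa j - (α₀ + α) * w0 j) ^ 2) / (4 * α ^ 2) := by
          rw [Finset.sum_div]; exact Finset.sum_congr rfl fun j _ => hterm j
      _ ≤ ((α₀ - α) ^ 2 * Q0) / (4 * α ^ 2) := by
          gcongr
          rw [hT]; nlinarith [hmul]
      _ = (α₀ - α) ^ 2 / (4 * α ^ 2) * Q0 := by ring
  -- split over F and its complement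
  have hsplit := Finset.sum_add_sum_compl F (fun j => (wa j - c * w0 j) ^ 2)
  have hFsum : ∑ j ∈ F, (wa j - c * w0 j) ^ 2
      = (α₀ + α) ^ 2 / (4 * α ^ 2) * ∑ j ∈ F, w0 j ^ 2 := by
    rw [Finset.mul_sum]
    refine Finset.sum_congr rfl fun j hj => ?_
    rw [hF j hj, hc]; field_simp; ring
  linarith [hsplit, hFsum, main]
end

section
/- Dual optimum estimation with sample priors (Lemma 6): let α₀ > 0, α > 0, β₀ > 0, and let θ*(α₀, β₀) minimize D(·; α₀, β₀) over the box [0,1]^n and θ*(α, β₀) minimize D(·; α, β₀) over [0,1]^n. Let R̂ and L̂ be disjoint subsets of {1, …, n} with [θ*(α, β₀)]_i = 0 for all i ∈ R̂ and [θ*(α, β₀)]_i = 1 for all i ∈ L̂; set D̂ = R̂ ∪ L̂ and D̂^c = {1, …, n} \ D̂. Define c = ((α − α₀)/(2γα))·[1]_{D̂^c} + ((α₀ + α)/(2α))·[θ*(α₀, β₀)]_{D̂^c} ∈ ℝ^{D̂^c}. Then ‖[θ*(α, β₀)]_{D̂^c} − c‖² ≤ ((α₀ − α)²/(4α²))·‖θ*(α₀,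 β₀) − (1/γ)·1‖² − ‖(((2γ − 1)α + α₀)/(2γα))·[1]_{L̂} − ((α₀ + α)/(2α))·[θ*(α₀, β₀)]_{L̂}‖² − ‖((α − α₀)/(2γα))·[1]_{R̂} + ((α₀ + α)/(2α))·[θ*(α₀, β₀)]_{R̂}‖². -/
open Finset

lemma sq_softThresh {β : ℝ} (hβ : 0 ≤ β) (u : ℝ) :
    softThresh β u ^ 2 = max (|u| - β) 0 ^ 2 := by
  unfold softThresh
  rcases lt_trichotomy u 0 with h | h | h
  · rw [Real.sign_of_neg h]; ring
  · subst h
    rw [Real.sign_zero, abs_zero, zero_sub, max_eq_right (neg_nonpos.mpr hβ)]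
    ring
  · rw [Real.sign_of_pos h]; ring

lemma maxsq_convex {β a b t : ℝ} (hβ : 0 ≤ β) (ht0 : 0 ≤ t) (ht1 : t ≤ 1) :
    max (|t * a + (1 - t) * b| - β) 0 ^ 2
      ≤ t * max (|a| - β) 0 ^ 2 + (1 - t) * max (|b| - β) 0 ^ 2 := by
  set p := max (|a| - β) 0 with hp
  set q := max (|b| - β) 0 with hq
  have hp0 : 0 ≤ p := le_max_right _ _
  have hq0 : 0 ≤ q := le_max_right _ _
  have hpa : |a| ≤ p + β := by
    have := le_max_left (|a| - β) 0; rw [← hp] at this; linarith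
  have hqb : |b| ≤ q + β := by
    have := le_max_left (|b| - β) 0; rw [← hq] at this; linarith
  have ht1' : 0 ≤ 1 - t := by linarith
  have habs : |t * a + (1 - t) * b| ≤ t * p + (1 - t) * q + β := by
    have h1 : |t * a + (1 - t) * b| ≤ |t * a| + |(1 - t) * b| := abs_add_le _ _
    rw [abs_mul, abs_mul, abs_of_nonneg ht0, abs_of_nonneg ht1'] at h1
    have h2 : t * |a| ≤ t * (p + β) := mul_le_mul_of_nonneg_left hpa ht0
    have h3 : (1 - t) * |b| ≤ (1 - t) * (q + β) := mul_le_mul_of_nonneg_left hqb ht1'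
    nlinarith
  have hstep : max (|t * a + (1 - t) * b| - β) 0 ≤ t * p + (1 - t) * q :=
    max_le (by linarith) (by positivity)
  have h4 : max (|t * a + (1 - t) * b| - β) 0 ^ 2 ≤ (t * p + (1 - t) * q) ^ 2 :=
    pow_le_pow_left₀ (le_max_right _ _) hstep 2
  nlinarith [sq_nonneg (p - q), mul_nonneg ht0 ht1']

lemma Dcomb {n p : ℕ} (xb : Fin n → Fin p → ℝ) (γ α β : ℝ)
    (hα : 0 < α) (hβ : 0 ≤ β) (θ θ' : Fin n → ℝ) (t : ℝ) (ht0 : 0 ≤ t) (ht1 : t ≤ 1) :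
    Dobj xb γ α β (fun i => t * θ i + (1 - t) * θ' i)
      ≤ t * Dobj xb γ α β θ + (1 - t) * Dobj xb γ α β θ'
        - (γ / (2 * (n : ℝ))) * (t * (1 - t)) * ∑ i, (θ i - θ' i) ^ 2 := by
  unfold Dobj
  have hs : ∀ j, (1 / (n : ℝ)) * ∑ i, (t * θ i + (1 - t) * θ' i) * xb i j
      = t * ((1 / (n : ℝ)) * ∑ i, θ i * xb i j)
        + (1 - t) * ((1 / (n : ℝ)) * ∑ i, θ' i * xb i j) := by
    intro j
    rw [Finset.sum_congr rfl (fun i _ => show (t * θ i + (1 - t) * θ' i) * xb i j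
        = t * (θ i * xb i j) + (1 - t) * (θ' i * xb i j) by ring),
      Finset.sum_add_distrib, ← Finset.mul_sum, ← Finset.mul_sum]
    ring
  have hA : ∑ j, softThresh β ((1 / (n : ℝ)) * ∑ i, (t * θ i + (1 - t) * θ' i) * xb i j) ^ 2
      ≤ t * ∑ j, softThresh β ((1 / (n : ℝ)) * ∑ i, θ i * xb i j) ^ 2
        + (1 - t) * ∑ j, softThresh β ((1 / (n : ℝ)) * ∑ i, θ' i * xb i j) ^ 2 := by
    rw [Finset.mul_sum, Finset.mul_sum, ← Finset.sum_add_distrib]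
    refine Finset.sum_le_sum fun j _ => ?_
    rw [hs j, sq_softThresh hβ, sq_softThresh hβ, sq_softThresh hβ]
    exact maxsq_convex hβ ht0 ht1
  have hG : ∑ i, (t * θ i + (1 - t) * θ' i) ^ 2
      = t * ∑ i, θ i ^ 2 + (1 - t) * ∑ i, θ' i ^ 2 - t * (1 - t) * ∑ i, (θ i - θ' i) ^ 2 := by
    rw [Finset.mul_sum, Finset.mul_sum, Finset.mul_sum, ← Finset.sum_add_distrib,
      ← Finset.sum_sub_distrib]
    exact Finset.sum_congr rfl fun i _ => by ring
  have hT : ∑ i, (t * θ i + (1 - t) * θ' i) = t * ∑ i, θ i + (1 - t) * ∑ i, θ' i := by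
    rw [Finset.mul_sum, Finset.mul_sum, ← Finset.sum_add_distrib]
  have h2α : (0:ℝ) ≤ 1 / (2 * α) := by positivity
  have hmul := mul_le_mul_of_nonneg_left hA h2α
  rw [hG, hT]
  nlinarith [hmul]

lemma min_strong {n p : ℕ} (hn : 0 < n) (xb : Fin n → Fin p → ℝ) (γ α β : ℝ)
    (hγ : 0 < γ) (hα : 0 < α) (hβ : 0 ≤ β)
    (θs θ : Fin n → ℝ)
    (hθsbox : ∀ i, 0 ≤ θs i ∧ θs i ≤ 1)
    (hθbox : ∀ i, 0 ≤ θ i ∧ θ i ≤ 1)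
    (hmin : ∀ θ' : Fin n → ℝ, (∀ i, 0 ≤ θ' i ∧ θ' i ≤ 1) →
      Dobj xb γ α β θs ≤ Dobj xb γ α β θ') :
    Dobj xb γ α β θs + (γ / (2 * (n : ℝ))) * ∑ i, (θ i - θs i) ^ 2 ≤ Dobj xb γ α β θ := by
  have hn' : (0:ℝ) < n := by exact_mod_cast hn
  set μ := γ / (2 * (n : ℝ)) with hμdef
  have hμ : 0 < μ := by rw [hμdef]; positivity
  set S := ∑ i, (θ i - θs i) ^ 2 with hSdef
  have hS0 : 0 ≤ S := Finset.sum_nonneg fun i _ => sq_nonneg _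
  have key : ∀ t : ℝ, 0 < t → t ≤ 1 →
      μ * (1 - t) * S ≤ Dobj xb γ α β θ - Dobj xb γ α β θs := by
    intro t ht0 ht1
    have hbox : ∀ i, 0 ≤ t * θ i + (1 - t) * θs i ∧ t * θ i + (1 - t) * θs i ≤ 1 := by
      intro i
      obtain ⟨h1, h2⟩ := hθbox i
      obtain ⟨h3, h4⟩ := hθsbox i
      have e1 : 0 ≤ t * θ i := mul_nonneg ht0.le h1
      have e2 : 0 ≤ (1 - t) * θs i := mul_nonneg (by linarith) h3
      have e3 : t * θ i ≤ t := by nlinarith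
      have e4 : (1 - t) * θs i ≤ 1 - t := by nlinarith
      exact ⟨by linarith, by linarith⟩
    have h1 := hmin (fun i => t * θ i + (1 - t) * θs i) hbox
    have h2 := Dcomb xb γ α β hα hβ θ θs t ht0.le ht1
    rw [← hμdef, ← hSdef] at h2
    have h3 : Dobj xb γ α β θs ≤ t * Dobj xb γ α β θ + (1 - t) * Dobj xb γ α β θs
        - μ * (t * (1 - t)) * S := le_trans h1 h2
    have h4 : t * (μ * (1 - t) * S) ≤ t * (Dobj xb γ α β θ - Dobj xb γ α β θs) := by
      nlinarith [h3]
    exact le_of_mul_le_mul_left h4 ht0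
  rcases hS0.eq_or_lt with hS | hS
  · have := hmin θ hθbox
    rw [← hS, mul_zero]
    linarith
  · have hd0 : 0 ≤ Dobj xb γ α β θ - Dobj xb γ α β θs := by linarith [hmin θ hθbox]
    by_contra hcon
    push_neg at hcon
    set d := Dobj xb γ α β θ - Dobj xb γ α β θs with hd
    have hdlt : d < μ * S := by rw [hd]; linarith
    have hposms : 0 < μ * S := mul_pos hμ hS
    set t := (μ * S - d) / (2 * (μ * S)) with ht
    have ht0 : 0 < t := div_pos (by linarith) (by positivity)
    have ht1 : t ≤ 1 := by
      rw [ht, div_le_one (by positivity)]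
      linarith
    have hk := key t ht0 ht1
    have htm : t * (μ * S) = (μ * S - d) / 2 := by
      rw [ht]; field_simp
    nlinarith [hk, htm, hdlt]

set_option maxHeartbeats 1600000 in
theorem dual_ball_estimate_with_priors {n p : ℕ} (hn : 0 < n) (hp : 0 < p)
    (xb : Fin n → Fin p → ℝ) (γ : ℝ) (hγ0 : 0 < γ) (hγ1 : γ < 1)
    (α₀ α β₀ : ℝ) (hα₀ : 0 < α₀) (hα : 0 < α) (hβ₀ : 0 < β₀)
    (θ0 θa : Fin n → ℝ)
    (hθ0box : ∀ i, 0 ≤ θ0 i ∧ θ0 i ≤ 1)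
    (hθ0 : ∀ θ : Fin n → ℝ, (∀ i, 0 ≤ θ i ∧ θ i ≤ 1) →
      Dobj xb γ α₀ β₀ θ0 ≤ Dobj xb γ α₀ β₀ θ)
    (hθabox : ∀ i, 0 ≤ θa i ∧ θa i ≤ 1)
    (hθa : ∀ θ : Fin n → ℝ, (∀ i, 0 ≤ θ i ∧ θ i ≤ 1) →
      Dobj xb γ α β₀ θa ≤ Dobj xb γ α β₀ θ)
    (R L : Finset (Fin n)) (hRL : Disjoint R L)
    (hR : ∀ i ∈ R, θa i = 0) (hL : ∀ i ∈ L, θa i = 1) :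
    ∑ i ∈ (R ∪ L)ᶜ,
        (θa i - ((α - α₀) / (2 * γ * α) + ((α₀ + α) / (2 * α)) * θ0 i)) ^ 2
      ≤ ((α₀ - α) ^ 2 / (4 * α ^ 2)) * ∑ i, (θ0 i - 1 / γ) ^ 2
        - ∑ i ∈ L, (((2 * γ - 1) * α + α₀) / (2 * γ * α)
            - ((α₀ + α) / (2 * α)) * θ0 i) ^ 2
        - ∑ i ∈ R, ((α - α₀) / (2 * γ * α)
            + ((α₀ + α) / (2 * α)) * θ0 i) ^ 2 := by
  have hn' : (0:ℝ) < n := by exact_mod_cast hn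
  have hα' : α ≠ 0 := ne_of_gt hα
  have hα₀' : α₀ ≠ 0 := ne_of_gt hα₀
  have hγ' : γ ≠ 0 := ne_of_gt hγ0
  have hnne : (n:ℝ) ≠ 0 := ne_of_gt hn'
  have h1 := min_strong hn xb γ α β₀ hγ0 hα hβ₀.le θa θ0 hθabox hθ0box hθa
  have h2 := min_strong hn xb γ α₀ β₀ hγ0 hα₀ hβ₀.le θ0 θa hθ0box hθabox hθ0
  have hSS : ∑ i, (θ0 i - θa i) ^ 2 = ∑ i, (θa i - θ0 i) ^ 2 :=
    Finset.sum_congr rfl fun i _ => by ring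
  rw [hSS] at h1
  set S := ∑ i, (θa i - θ0 i) ^ 2 with hS
  set Aa := ∑ j, softThresh β₀ ((1 / (n : ℝ)) * ∑ i, θa i * xb i j) ^ 2 with hAa
  set A0 := ∑ j, softThresh β₀ ((1 / (n : ℝ)) * ∑ i, θ0 i * xb i j) ^ 2 with hA0
  set Ga := ∑ i, θa i ^ 2 with hGa
  set G0 := ∑ i, θ0 i ^ 2 with hG0
  set Ta := ∑ i, θa i with hTa
  set T0 := ∑ i, θ0 i with hT0
  -- clean versions of h1 and h2
  have e1l : (2*α) * (Dobj xb γ α β₀ θa + (γ / (2 * (n:ℝ))) * S)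
      = Aa + (γ/(n:ℝ))*(α*Ga) - (2/(n:ℝ))*(α*Ta) + (γ/(n:ℝ))*(α*S) := by
    simp only [Dobj, ← hAa, ← hGa, ← hTa]
    field_simp
  have e1r : (2*α) * Dobj xb γ α β₀ θ0
      = A0 + (γ/(n:ℝ))*(α*G0) - (2/(n:ℝ))*(α*T0) := by
    simp only [Dobj, ← hA0, ← hG0, ← hT0]
    field_simp
  have e2l : (2*α₀) * (Dobj xb γ α₀ β₀ θ0 + (γ / (2 * (n:ℝ))) * S)
      = A0 + (γ/(n:ℝ))*(α₀*G0) - (2/(n:ℝ))*(α₀*T0) + (γ/(n:ℝ))*(α₀*S) := by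
    simp only [Dobj, ← hA0, ← hG0, ← hT0]
    field_simp
  have e2r : (2*α₀) * Dobj xb γ α₀ β₀ θa
      = Aa + (γ/(n:ℝ))*(α₀*Ga) - (2/(n:ℝ))*(α₀*Ta) := by
    simp only [Dobj, ← hAa, ← hGa, ← hTa]
    field_simp
  have m1 := mul_le_mul_of_nonneg_left h1 (by positivity : (0:ℝ) ≤ 2*α)
  have m2 := mul_le_mul_of_nonneg_left h2 (by positivity : (0:ℝ) ≤ 2*α₀)
  have hKEY : (γ/(n:ℝ))*((α+α₀)*S) + (γ/(n:ℝ))*((α-α₀)*Ga) - (γ/(n:ℝ))*((α-α₀)*G0)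
      + (2/(n:ℝ))*((α-α₀)*T0) - (2/(n:ℝ))*((α-α₀)*Ta) ≤ 0 := by
    linarith [m1, m2, e1l, e1r, e2l, e2r]
  set W := ∑ i, (θ0 i - 1 / γ) ^ 2 with hW
  set F := ∑ i, (θa i - ((α - α₀) / (2 * γ * α) + ((α₀ + α) / (2 * α)) * θ0 i)) ^ 2 with hF
  have hsum : (2*α*γ/(n:ℝ))*F - (2*α*γ/(n:ℝ))*(((α₀ - α) ^ 2 / (4 * α ^ 2))*W)
      = (γ/(n:ℝ))*((α+α₀)*S) + (γ/(n:ℝ))*((α-α₀)*Ga) - (γ/(n:ℝ))*((α-α₀)*G0)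
        + (2/(n:ℝ))*((α-α₀)*T0) - (2/(n:ℝ))*((α-α₀)*Ta) := by
    rw [hF, hW, hS, hGa, hG0, hTa, hT0]
    simp only [Finset.mul_sum]
    rw [← Finset.sum_sub_distrib, ← Finset.sum_add_distrib, ← Finset.sum_sub_distrib,
      ← Finset.sum_add_distrib, ← Finset.sum_sub_distrib]
    refine Finset.sum_congr rfl fun i _ => ?_
    field_simp
    ring
  have hK : (0:ℝ) < 2*α*γ/(n:ℝ) := by positivity
  have hFW : F ≤ ((α₀ - α) ^ 2 / (4 * α ^ 2)) * W := by
    have hmul : (2*α*γ/(n:ℝ)) * F ≤ (2*α*γ/(n:ℝ)) * (((α₀ - α) ^ 2 / (4 * α ^ 2)) * W) := by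
      linarith [hsum, hKEY]
    exact le_of_mul_le_mul_left hmul hK
  -- split F over the partition
  have hsplit : ∑ i ∈ (R ∪ L), (θa i - ((α - α₀) / (2 * γ * α) + ((α₀ + α) / (2 * α)) * θ0 i)) ^ 2
      + ∑ i ∈ (R ∪ L)ᶜ, (θa i - ((α - α₀) / (2 * γ * α) + ((α₀ + α) / (2 * α)) * θ0 i)) ^ 2
      = F := by
    rw [hF]; exact Finset.sum_add_sum_compl _ _
  have hunion : ∑ i ∈ (R ∪ L), (θa i - ((α - α₀) / (2 * γ * α) + ((α₀ + α) / (2 * α)) * θ0 i)) ^ 2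
      = ∑ i ∈ R, (θa i - ((α - α₀) / (2 * γ * α) + ((α₀ + α) / (2 * α)) * θ0 i)) ^ 2
        + ∑ i ∈ L, (θa i - ((α - α₀) / (2 * γ * α) + ((α₀ + α) / (2 * α)) * θ0 i)) ^ 2 :=
    Finset.sum_union hRL
  have hRe : ∑ i ∈ R, (θa i - ((α - α₀) / (2 * γ * α) + ((α₀ + α) / (2 * α)) * θ0 i)) ^ 2
      = ∑ i ∈ R, ((α - α₀) / (2 * γ * α) + ((α₀ + α) / (2 * α)) * θ0 i) ^ 2 :=
    Finset.sum_congr rfl fun i hi => by rw [hR i hi]; ring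
  have hLe : ∑ i ∈ L, (θa i - ((α - α₀) / (2 * γ * α) + ((α₀ + α) / (2 * α)) * θ0 i)) ^ 2
      = ∑ i ∈ L, (((2 * γ - 1) * α + α₀) / (2 * γ * α) - ((α₀ + α) / (2 * α)) * θ0 i) ^ 2 := by
    refine Finset.sum_congr rfl fun i hi => ?_
    rw [hL i hi]
    have hb : ((2 * γ - 1) * α + α₀) / (2 * γ * α) = 1 - (α - α₀) / (2 * γ * α) := by
      field_simp; ring
    rw [hb]; ring
  linarith [hFW, hsplit, hunion, hRe, hLe]
end
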